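/- arXiv:1307.5781 — 8 statements merged into one kernel-verified Lean document; each statement's English description precedes it below -/
import Mathlib

section
/- Let G be a finite simple graph and let x, y be two distinct vertices of G such that the compression C_{xy}(G) is not isomorphic to G. Then the number of edges of the line graph of G is strictly smaller than the number of edges of the line graph of C_{xy}(G), i.e. e_L(G) < e_L(C_{xy}(G)). -/
open SimpleGraph

/-- The compression `C_{xy}(G)`: every edge `{x,v}` of `G` with `v ≠ y` and `v` not adjacent
to `y` in `G` is replaced by the edge `{y,v}`; all other edges are unchanged. -/
def compress {V : Type*} (G : SimpleGraph V) (x y : V) : SimpleGraph V where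
  Adj a b :=
    (G.Adj a b ∧ ¬ ((a = x ∧ b ≠ y ∧ ¬ G.Adj y b) ∨ (b = x ∧ a ≠ y ∧ ¬ G.Adj y a))) ∨
    (a = y ∧ b ≠ y ∧ G.Adj x b ∧ ¬ G.Adj y b) ∨
    (b = y ∧ a ≠ y ∧ G.Adj x a ∧ ¬ G.Adj y a)
  symm := by
    constructor
    intro a b h
    rcases h with ⟨hab, hn⟩ | h | h
    · exact Or.inl ⟨hab.symm, fun hc => hn hc.symm⟩
    · exact Or.inr (Or.inr h)
    · exact Or.inr (Or.inl h)
  loopless := by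
    constructor
    intro a h
    rcases h with ⟨hab, _⟩ | ⟨_, h, _⟩ | ⟨_, h, _⟩
    · exact G.irrefl hab
    · exact h ‹_›
    · exact h ‹_›

/-- The number of edges of the line graph of `G`. -/
noncomputable def eL {V : Type*} (G : SimpleGraph V) : ℕ :=
  Nat.card G.lineGraph.edgeSet


section Aux
open Finset

variable {V : Type*} [Fintype V] [DecidableEq V] (G : SimpleGraph V) [DecidableRel G.Adj]

private lemma lineGraph_degree' {a b : V} (h : G.Adj a b)
    [Fintype (G.lineGraph.neighborSet ⟨s(a,b), h⟩)] :
    G.lineGraph.degree ⟨s(a,b), h⟩ = G.degree a + G.degree b - 2 := by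
  classical
  rw [← card_neighborFinset_eq_degree]
  have hcard : (G.lineGraph.neighborFinset ⟨s(a,b), h⟩).card
      = ((G.incidenceFinset a ∪ G.incidenceFinset b).erase s(a,b)).card := by
    refine Finset.card_bij (fun f _ => (f : Sym2 V)) ?_ ?_ ?_
    · rintro ⟨f, hf⟩ hmem
      rw [mem_neighborFinset] at hmem
      obtain ⟨hne, v, hv1, hv2⟩ := lineGraph_adj_iff_exists.mp hmem
      simp only [Finset.mem_erase, Finset.mem_union, mem_incidenceFinset, incidenceSet]
      refine ⟨by simpa [Subtype.ext_iff, ne_comm] using hne, ?_⟩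
      rcases Sym2.mem_iff.mp hv1 with rfl | rfl
      · exact Or.inl ⟨hf, hv2⟩
      · exact Or.inr ⟨hf, hv2⟩
    · rintro ⟨f, hf⟩ _ ⟨g, hg⟩ _ hfg
      exact Subtype.ext hfg
    · intro f hf
      simp only [Finset.mem_erase, Finset.mem_union, mem_incidenceFinset, incidenceSet,
        Set.mem_setOf_eq] at hf
      obtain ⟨hne, hmem⟩ := hf
      have hfe : f ∈ G.edgeSet := by rcases hmem with ⟨h1, _⟩ | ⟨h1, _⟩ <;> exact h1
      refine ⟨⟨f, hfe⟩, ?_, rfl⟩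
      rw [mem_neighborFinset, lineGraph_adj_iff_exists]
      constructor
      · simp [Subtype.ext_iff, ne_comm, hne]
      · rcases hmem with ⟨_, h1⟩ | ⟨_, h1⟩
        · exact ⟨a, by simp, h1⟩
        · exact ⟨b, by simp, h1⟩
  rw [hcard]
  have hmem : s(a,b) ∈ G.incidenceFinset a ∪ G.incidenceFinset b := by
    simp [mem_incidenceFinset, incidenceSet, h.symm, h]
  rw [Finset.card_erase_of_mem hmem]
  have hinter : G.incidenceFinset a ∩ G.incidenceFinset b = {s(a,b)} := by
    ext e
    simp only [Finset.mem_inter, mem_incidenceFinset, Finset.mem_singleton]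
    rw [← Set.mem_inter_iff, G.incidenceSet_inter_incidenceSet_of_adj h, Set.mem_singleton_iff]
  have := Finset.card_union_add_card_inter (G.incidenceFinset a) (G.incidenceFinset b)
  rw [hinter] at this
  simp only [Finset.card_singleton] at this
  rw [G.card_incidenceFinset_eq_degree, G.card_incidenceFinset_eq_degree] at this
  have h1 : 1 ≤ G.degree a := by
    rw [← card_neighborFinset_eq_degree]
    exact Finset.card_pos.mpr ⟨b, by simpa [mem_neighborFinset] using h⟩
  have h2 : 1 ≤ G.degree b := by
    rw [← card_neighborFinset_eq_degree]
    exact Finset.card_pos.mpr ⟨a, by simpa [mem_neighborFinset] using h.symm⟩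
  omega

private def degSum (G : SimpleGraph V) [DecidableRel G.Adj] : Sym2 V → ℕ :=
  Sym2.lift ⟨fun u v => G.degree u + G.degree v, fun u v => by simp [Nat.add_comm]⟩

private lemma sum_degSum : ∑ e ∈ G.edgeFinset, degSum G e = ∑ v, G.degree v ^ 2 := by
  classical
  have hfib : ∀ d : G.Dart, d.edge ∈ G.edgeFinset := fun d => by
    rw [mem_edgeFinset]; exact d.edge_mem
  have key1 := Finset.sum_fiberwise_of_maps_to (s := univ) (fun d _ => hfib d)
    (fun d => degSum G d.edge)
  have h1 : ∑ d : G.Dart, degSum G d.edge = ∑ e ∈ G.edgeFinset, 2 * degSum G e := by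
    rw [← key1]
    refine Finset.sum_congr rfl fun e he => ?_
    have : ∑ d ∈ univ.filter (fun d : G.Dart => d.edge = e), degSum G d.edge
        = ∑ d ∈ univ.filter (fun d : G.Dart => d.edge = e), degSum G e :=
      Finset.sum_congr rfl fun d hd => by rw [(Finset.mem_filter.mp hd).2]
    rw [this, Finset.sum_const, smul_eq_mul, G.dart_edge_fiber_card e (mem_edgeFinset.mp he)]
  have h2 : ∀ d : G.Dart, degSum G d.edge = G.degree d.fst + G.degree d.snd := fun d => rfl
  have keyf := Finset.sum_fiberwise_of_maps_to
    (fun (d : G.Dart) (_ : d ∈ univ) => Finset.mem_univ d.fst) (fun d => G.degree d.fst)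
  have hfst : ∑ d : G.Dart, G.degree d.fst = ∑ v, G.degree v ^ 2 := by
    rw [← keyf]
    refine Finset.sum_congr rfl fun v _ => ?_
    have : ∑ d ∈ univ.filter (fun d : G.Dart => d.fst = v), G.degree d.fst
        = ∑ d ∈ univ.filter (fun d : G.Dart => d.fst = v), G.degree v :=
      Finset.sum_congr rfl fun d hd => by rw [(Finset.mem_filter.mp hd).2]
    rw [this, Finset.sum_const, smul_eq_mul]
    have := G.dart_fst_fiber_card_eq_degree v
    rw [show ({d : G.Dart | d.fst = v} : Finset _) = univ.filter (fun d : G.Dart => d.fst = v)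
      from rfl] at this
    rw [this, sq]
  have hsnd : ∑ d : G.Dart, G.degree d.snd = ∑ d : G.Dart, G.degree d.fst :=
    Fintype.sum_bijective Dart.symm Dart.symm_involutive.bijective _ _ (fun d => rfl)
  have h3 : ∑ d : G.Dart, degSum G d.edge = 2 * ∑ v, G.degree v ^ 2 := by
    simp only [h2]
    rw [Finset.sum_add_distrib, hsnd, hfst, two_mul]
  rw [← Finset.mul_sum] at h1
  omega

private lemma two_mul_eL : 2 * eL G + ∑ v, G.degree v = ∑ v, G.degree v ^ 2 := by
  classical
  have heL : eL G = #(G.lineGraph.edgeFinset) := by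
    rw [eL, Nat.card_eq_fintype_card, ← Set.toFinset_card]
    congr 1
  have hsum := G.lineGraph.sum_degrees_eq_twice_card_edges
  have hdeg : ∀ e : G.edgeSet, G.lineGraph.degree e = degSum G (e : Sym2 V) - 2 := by
    rintro ⟨e, he⟩
    induction e with
    | _ a b => rw [lineGraph_degree' G he]; rfl
  have hsum2 : ∑ e : G.edgeSet, G.lineGraph.degree e
      = ∑ e ∈ G.edgeFinset, (degSum G e - 2) := by
    rw [Finset.sum_congr rfl (fun e _ => hdeg e),
      ← Finset.sum_coe_sort G.edgeFinset (fun e => degSum G e - 2)]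
    exact Fintype.sum_equiv (Equiv.subtypeEquivRight (fun e => (mem_edgeFinset (e := e)).symm))
      _ _ (fun e => rfl)
  have hge : ∀ e ∈ G.edgeFinset, 2 ≤ degSum G e := by
    intro e he
    rw [mem_edgeFinset] at he
    induction e with
    | _ a b =>
      have h1 : 1 ≤ G.degree a := by
        rw [← card_neighborFinset_eq_degree]
        exact Finset.card_pos.mpr ⟨b, by simpa [mem_neighborFinset] using he⟩
      have h2 : 1 ≤ G.degree b := by
        rw [← card_neighborFinset_eq_degree]
        exact Finset.card_pos.mpr ⟨a, by simpa [mem_neighborFinset] using (G.adj_symm he)⟩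
      show 2 ≤ G.degree a + G.degree b
      omega
  have hsplit : ∑ e ∈ G.edgeFinset, (degSum G e - 2) + 2 * #G.edgeFinset
      = ∑ e ∈ G.edgeFinset, degSum G e := by
    rw [mul_comm, ← smul_eq_mul, ← Finset.sum_const, ← Finset.sum_add_distrib]
    exact Finset.sum_congr rfl fun e he => Nat.sub_add_cancel (hge e he)
  have hG := G.sum_degrees_eq_twice_card_edges
  have hS := sum_degSum G
  omega

variable (x y : V)

omit [Fintype V] [DecidableEq V] [DecidableRel G.Adj] in
private lemma compress_adj {a b : V} : (compress G x y).Adj a b ↔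
    (G.Adj a b ∧ ¬ ((a = x ∧ b ≠ y ∧ ¬ G.Adj y b) ∨ (b = x ∧ a ≠ y ∧ ¬ G.Adj y a))) ∨
    (a = y ∧ b ≠ y ∧ G.Adj x b ∧ ¬ G.Adj y b) ∨
    (b = y ∧ a ≠ y ∧ G.Adj x a ∧ ¬ G.Adj y a) := Iff.rfl

private instance : DecidableRel (compress G x y).Adj := fun a b => by
  rw [compress_adj]; infer_instance

/-- the set of "moved" neighbors of x -/
private def movedSet : Finset V := (G.neighborFinset x).filter (fun v => ¬(v = y ∨ G.Adj y v))

private lemma compress_neighborFinset_x (hxy : x ≠ y) :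
    (compress G x y).neighborFinset x
      = (G.neighborFinset x).filter (fun b => b = y ∨ G.Adj y b) := by
  ext b
  simp only [mem_neighborFinset, mem_filter]
  rw [compress_adj]
  constructor
  · rintro (⟨hab, hn⟩ | ⟨hxy', -⟩ | ⟨-, -, hxx, -⟩)
    · refine ⟨hab, ?_⟩
      by_contra hb
      push_neg at hb
      exact hn (Or.inl ⟨rfl, hb.1, hb.2⟩)
    · exact absurd hxy' hxy
    · exact absurd hxx (G.loopless.irrefl x)
  · rintro ⟨hab, hb⟩
    refine Or.inl ⟨hab, ?_⟩
    rintro (⟨-, hby, hnb⟩ | ⟨hbx, -, -⟩)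
    · rcases hb with rfl | hb
      · exact hby rfl
      · exact hnb hb
    · exact G.loopless.irrefl x (hbx ▸ hab)

private lemma compress_neighborFinset_y (hxy : x ≠ y) :
    (compress G x y).neighborFinset y = G.neighborFinset y ∪ movedSet G x y := by
  ext b
  simp only [mem_neighborFinset, mem_union, movedSet, mem_filter]
  rw [compress_adj]
  constructor
  · rintro (⟨hab, -⟩ | ⟨-, hby, hxb, hyb⟩ | ⟨hby, hyy, -⟩)
    · exact Or.inl hab
    · exact Or.inr ⟨hxb, by push_neg; exact ⟨hby, hyb⟩⟩
    · exact absurd rfl hyy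
  · rintro (hab | ⟨hxb, hb⟩)
    · refine Or.inl ⟨hab, ?_⟩
      rintro (⟨hyx, -, -⟩ | ⟨hbx, hyy, -⟩)
      · exact hxy hyx.symm
      · exact hyy rfl
    · push_neg at hb
      exact Or.inr (Or.inl ⟨rfl, hb.1, hxb, hb.2⟩)

private lemma compress_neighborFinset_other {v : V} (hvx : v ≠ x) (hvy : v ≠ y)
    (hxv : G.Adj x v) (hyv : ¬ G.Adj y v) :
    (compress G x y).neighborFinset v = insert y ((G.neighborFinset v).erase x) := by
  ext b
  simp only [mem_neighborFinset, mem_insert, mem_erase]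
  rw [compress_adj]
  constructor
  · rintro (⟨hab, hn⟩ | ⟨hvy', -⟩ | ⟨hby, -, -, -⟩)
    · refine Or.inr ⟨?_, hab⟩
      rintro rfl
      exact hn (Or.inr ⟨rfl, hvy, hyv⟩)
    · exact absurd hvy' hvy
    · exact Or.inl hby
  · rintro (rfl | ⟨hbx, hab⟩)
    · exact Or.inr (Or.inr ⟨rfl, hvy, hxv, hyv⟩)
    · refine Or.inl ⟨hab, ?_⟩
      rintro (⟨hvx', -⟩ | ⟨hbx', -, -⟩)
      · exact hvx hvx'
      · exact hbx hbx'

private lemma compress_neighborFinset_other' {v : V} (hvx : v ≠ x) (hvy : v ≠ y)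
    (hm : ¬(G.Adj x v ∧ ¬ G.Adj y v)) :
    (compress G x y).neighborFinset v = G.neighborFinset v := by
  ext b
  simp only [mem_neighborFinset]
  rw [compress_adj]
  constructor
  · rintro (⟨hab, -⟩ | ⟨hvy', -⟩ | ⟨-, -, hxv, hyv⟩)
    · exact hab
    · exact absurd hvy' hvy
    · exact absurd ⟨hxv, hyv⟩ hm
  · intro hab
    refine Or.inl ⟨hab, ?_⟩
    rintro (⟨hvx', -, -⟩ | ⟨hbx, -, hyv⟩)
    · exact hvx hvx'
    · exact hm ⟨hbx ▸ hab.symm, hyv⟩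

private lemma compress_degree_x (hxy : x ≠ y) :
    (compress G x y).degree x = G.degree x - #(movedSet G x y)
      ∧ #(movedSet G x y) ≤ G.degree x := by
  have hsplit := Finset.card_filter_add_card_filter_not
    (s := G.neighborFinset x) (p := fun b => b = y ∨ G.Adj y b)
  rw [← card_neighborFinset_eq_degree, ← card_neighborFinset_eq_degree,
    compress_neighborFinset_x G x y hxy]
  have : movedSet G x y = (G.neighborFinset x).filter (fun b => ¬(b = y ∨ G.Adj y b)) := rfl
  rw [this]
  omega

private lemma compress_degree_y (hxy : x ≠ y) :
    (compress G x y).degree y = G.degree y + #(movedSet G x y) := by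
  rw [← card_neighborFinset_eq_degree, ← card_neighborFinset_eq_degree,
    compress_neighborFinset_y G x y hxy, Finset.card_union_of_disjoint]
  rw [Finset.disjoint_left]
  intro b hb hbm
  simp only [movedSet, mem_filter, mem_neighborFinset] at hb hbm
  push_neg at hbm
  exact hbm.2.2 hb

private lemma compress_degree_other {v : V} (hvx : v ≠ x) (hvy : v ≠ y) :
    (compress G x y).degree v = G.degree v := by
  by_cases hm : G.Adj x v ∧ ¬ G.Adj y v
  · rw [← card_neighborFinset_eq_degree, ← card_neighborFinset_eq_degree,
      compress_neighborFinset_other G x y hvx hvy hm.1 hm.2]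
    have hx : x ∈ G.neighborFinset v := by rw [mem_neighborFinset]; exact hm.1.symm
    have hy : y ∉ (G.neighborFinset v).erase x := by
      simp only [mem_erase, mem_neighborFinset]
      rintro ⟨-, h⟩
      exact hm.2 h.symm
    rw [Finset.card_insert_of_notMem hy, Finset.card_erase_of_mem hx]
    have : 0 < #(G.neighborFinset v) := Finset.card_pos.mpr ⟨x, hx⟩
    omega
  · rw [← card_neighborFinset_eq_degree, ← card_neighborFinset_eq_degree,
      compress_neighborFinset_other' G x y hvx hvy hm]

private lemma filter_part (u w : V) :
    #((G.neighborFinset u).filter (fun b => b = w ∨ G.Adj w b))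
      = #(G.neighborFinset u ∩ G.neighborFinset w) + if G.Adj u w then 1 else 0 := by
  rw [Finset.filter_or, Finset.card_union_of_disjoint, add_comm]
  · congr 1
    · have : (G.neighborFinset u).filter (fun b => G.Adj w b)
          = G.neighborFinset u ∩ G.neighborFinset w := by
        ext b
        simp [mem_neighborFinset, mem_inter, and_comm]
      rw [this]
    · rw [Finset.filter_eq']
      by_cases h : G.Adj u w
      · rw [if_pos (by rwa [mem_neighborFinset]), if_pos h, Finset.card_singleton]
      · rw [if_neg (by rwa [mem_neighborFinset]), if_neg h, Finset.card_empty]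
  · rw [Finset.disjoint_left]
    intro b hb hb'
    rw [Finset.mem_filter] at hb hb'
    exact G.loopless.irrefl w (hb.2 ▸ hb'.2)

private lemma degree_balance :
    G.degree x + #(movedSet G y x) = G.degree y + #(movedSet G x y) := by
  have hx := Finset.card_filter_add_card_filter_not
    (s := G.neighborFinset x) (p := fun b => b = y ∨ G.Adj y b)
  have hy := Finset.card_filter_add_card_filter_not
    (s := G.neighborFinset y) (p := fun b => b = x ∨ G.Adj x b)
  have hmx : movedSet G x y = (G.neighborFinset x).filter (fun b => ¬(b = y ∨ G.Adj y b)) := rfl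
  have hmy : movedSet G y x = (G.neighborFinset y).filter (fun b => ¬(b = x ∨ G.Adj x b)) := rfl
  have h1 := filter_part G x y
  have h2 := filter_part G y x
  rw [Finset.inter_comm] at h2
  have h3 : (if G.Adj y x then 1 else 0) = if G.Adj x y then 1 else 0 :=
    if_congr (G.adj_comm y x) rfl rfl
  rw [h3] at h2
  rw [← card_neighborFinset_eq_degree, ← card_neighborFinset_eq_degree, hmx, hmy]
  omega

omit [Fintype V] [DecidableEq V] [DecidableRel G.Adj] in
private lemma compress_eq_self (hA : ∀ v, G.Adj x v → v = y ∨ G.Adj y v) :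
    compress G x y = G := by
  ext a b
  rw [compress_adj]
  constructor
  · rintro (⟨hab, -⟩ | ⟨rfl, hby, hxb, hyb⟩ | ⟨rfl, hay, hxa, hya⟩)
    · exact hab
    · rcases hA b hxb with rfl | h
      · exact absurd rfl hby
      · exact absurd h hyb
    · rcases hA a hxa with rfl | h
      · exact absurd rfl hay
      · exact absurd h hya
  · intro hab
    refine Or.inl ⟨hab, ?_⟩
    rintro (⟨rfl, hby, hyb⟩ | ⟨rfl, hay, hya⟩)
    · rcases hA b hab with rfl | h
      · exact hby rfl
      · exact hyb h
    · rcases hA a hab.symm with rfl | h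
      · exact hay rfl
      · exact hya h

omit [Fintype V] [DecidableRel G.Adj] in
private lemma compress_iso_swap (hxy : x ≠ y) (hC : ∀ v, G.Adj y v → v = x ∨ G.Adj x v) :
    Nonempty (compress G x y ≃g G) := by
  classical
  refine ⟨⟨Equiv.swap x y, ?_⟩⟩
  intro a b
  rcases eq_or_ne x a with rfl | hax
  · rcases eq_or_ne x b with rfl | hbx
    · simp [compress_adj]
    · rcases eq_or_ne y b with rfl | hby
      · rw [Equiv.swap_apply_left, Equiv.swap_apply_right, compress_adj]
        constructor
        · intro h
          exact Or.inl ⟨h.symm, by rintro (⟨-, hyy, -⟩ | ⟨hyx, -, -⟩) <;> simp_all⟩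
        · rintro (⟨hab, -⟩ | ⟨hxy', -⟩ | ⟨-, -, hxx, -⟩)
          · exact hab.symm
          · exact absurd hxy' hxy
          · exact absurd hxx (G.loopless.irrefl x)
      · rw [Equiv.swap_apply_left, Equiv.swap_apply_of_ne_of_ne hbx.symm hby.symm, compress_adj]
        constructor
        · intro h
          have hxb : G.Adj x b := by
            rcases hC b h with rfl | h' <;> [exact absurd rfl hbx.symm; exact h']
          exact Or.inl ⟨hxb, by rintro (⟨-, -, hyb⟩ | ⟨hbx', -, -⟩) <;> simp_all⟩
        · rintro (⟨hab, hn⟩ | ⟨hxy', -⟩ | ⟨hby', -, -⟩)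
          · by_contra hyb
            exact hn (Or.inl ⟨rfl, hby.symm, hyb⟩)
          · exact absurd hxy' hxy
          · exact absurd hby' hby.symm
  · rcases eq_or_ne y a with rfl | hay
    · rw [Equiv.swap_apply_right]
      rcases eq_or_ne x b with rfl | hbx
      · rw [Equiv.swap_apply_left, compress_adj]
        constructor
        · intro h
          exact Or.inl ⟨h.symm, by rintro (⟨hyx, -, -⟩ | ⟨-, hyy, -⟩) <;> simp_all⟩
        · rintro (⟨hab, -⟩ | ⟨-, -, hxx, -⟩ | ⟨hxy', -, -⟩)
          · exact hab.symm
          · exact absurd hxx (G.loopless.irrefl x)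
          · exact absurd hxy' hxy
      · rcases eq_or_ne y b with rfl | hby
        · simp [compress_adj]
        · rw [Equiv.swap_apply_of_ne_of_ne hbx.symm hby.symm, compress_adj]
          constructor
          · intro h
            by_cases hyb : G.Adj y b
            · exact Or.inl ⟨hyb, by rintro (⟨hyx, -, -⟩ | ⟨hbx', -, -⟩) <;> simp_all⟩
            · exact Or.inr (Or.inl ⟨rfl, hby.symm, h, hyb⟩)
          · rintro (⟨hab, -⟩ | ⟨-, -, hxb, -⟩ | ⟨hby', -, -⟩)
            · rcases hC b hab with rfl | h
              · exact absurd rfl hbx.symm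
              · exact h
            · exact hxb
            · exact absurd hby' hby.symm
    · rw [Equiv.swap_apply_of_ne_of_ne hax.symm hay.symm]
      rcases eq_or_ne x b with rfl | hbx
      · rw [Equiv.swap_apply_left, compress_adj]
        constructor
        · intro h
          have hxa : G.Adj x a := by
            rcases hC a h.symm with rfl | h' <;> [exact absurd rfl hax.symm; exact h']
          refine Or.inl ⟨hxa.symm, ?_⟩
          rintro (⟨hax', -, -⟩ | ⟨-, -, hya⟩)
          · exact hax hax'.symm
          · exact hya h.symm
        · rintro (⟨hab, hn⟩ | ⟨hay', -⟩ | ⟨hxy', -⟩)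
          · by_contra hya
            exact (hn (Or.inr ⟨rfl, hay.symm, fun h => hya h.symm⟩))
          · exact absurd hay' hay.symm
          · exact absurd hxy' hxy
      · rcases eq_or_ne y b with rfl | hby
        · rw [Equiv.swap_apply_right, compress_adj]
          constructor
          · intro h
            by_cases hya : G.Adj y a
            · exact Or.inl ⟨hya.symm, by rintro (⟨hax', -, -⟩ | ⟨hyx, -, -⟩) <;> simp_all⟩
            · exact Or.inr (Or.inr ⟨rfl, hay.symm, h.symm, hya⟩)
          · rintro (⟨hab, -⟩ | ⟨hay', -⟩ | ⟨-, -, hxa, -⟩)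
            · rcases hC a hab.symm with rfl | h
              · exact absurd rfl hax.symm
              · exact h.symm
            · exact absurd hay' hay.symm
            · exact hxa.symm
        · rw [Equiv.swap_apply_of_ne_of_ne hbx.symm hby.symm, compress_adj]
          constructor
          · intro h
            exact Or.inl ⟨h, by rintro (⟨hax', -, -⟩ | ⟨hbx', -, -⟩) <;> simp_all⟩
          · rintro (⟨hab, -⟩ | ⟨hay', -⟩ | ⟨hby', -, -⟩)
            · exact hab
            · exact absurd hay' hay.symm
            · exact absurd hby' hby.symm

omit [DecidableEq V] [DecidableRel G.Adj] in
private lemma sum_split (hxy : x ≠ y) (f g : V → ℕ)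
    (h : ∀ v, v ≠ x → v ≠ y → f v = g v) :
    ∑ v, f v + (g x + g y) = ∑ v, g v + (f x + f y) := by
  classical
  have hyx : y ∈ (univ : Finset V).erase x := Finset.mem_erase.mpr ⟨hxy.symm, mem_univ y⟩
  have hfx := Finset.add_sum_erase (univ : Finset V) f (mem_univ x)
  have hfy := Finset.add_sum_erase ((univ : Finset V).erase x) f hyx
  have hgx := Finset.add_sum_erase (univ : Finset V) g (mem_univ x)
  have hgy := Finset.add_sum_erase ((univ : Finset V).erase x) g hyx
  have hcong : ∑ v ∈ ((univ : Finset V).erase x).erase y, f v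
      = ∑ v ∈ ((univ : Finset V).erase x).erase y, g v := by
    refine Finset.sum_congr rfl fun v hv => ?_
    rw [Finset.mem_erase, Finset.mem_erase] at hv
    exact h v hv.2.1 hv.1
  omega

end Aux

open Finset in
/-- If the compression `C_{xy}(G)` is not isomorphic to `G`, then the number of edges of the
line graph strictly increases: `e_L(G) < e_L(C_{xy}(G))`. -/
theorem eL_lt_eL_compress_of_not_iso {V : Type*} [Fintype V] (G : SimpleGraph V) (x y : V)
    (hxy : x ≠ y) (hniso : ¬ Nonempty (compress G x y ≃g G)) :
    eL G < eL (compress G x y) := by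
  classical
  have ha : 1 ≤ #(movedSet G x y) := by
    rcases Nat.eq_zero_or_pos #(movedSet G x y) with h0 | h
    · exfalso
      apply hniso
      have hAe : movedSet G x y = ∅ := Finset.card_eq_zero.mp h0
      have hAforall : ∀ v, G.Adj x v → v = y ∨ G.Adj y v := by
        intro v hv
        by_contra hcon
        push_neg at hcon
        have : v ∈ movedSet G x y := by
          rw [movedSet, Finset.mem_filter, mem_neighborFinset]
          push_neg
          exact ⟨hv, hcon.1, hcon.2⟩
        rw [hAe] at this
        exact absurd this (Finset.notMem_empty v)
      refine ⟨?_⟩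
      rw [compress_eq_self G x y hAforall]
    · exact h
  have hc : 1 ≤ #(movedSet G y x) := by
    rcases Nat.eq_zero_or_pos #(movedSet G y x) with h0 | h
    · exfalso
      apply hniso
      have hCe : movedSet G y x = ∅ := Finset.card_eq_zero.mp h0
      have hCforall : ∀ v, G.Adj y v → v = x ∨ G.Adj x v := by
        intro v hv
        by_contra hcon
        push_neg at hcon
        have : v ∈ movedSet G y x := by
          rw [movedSet, Finset.mem_filter, mem_neighborFinset]
          push_neg
          exact ⟨hv, hcon.1, hcon.2⟩
        rw [hCe] at this
        exact absurd this (Finset.notMem_empty v)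
      exact compress_iso_swap G x y hxy hCforall
    · exact h
  obtain ⟨hdx, hle⟩ := compress_degree_x G x y hxy
  have hdy := compress_degree_y G x y hxy
  have hbal := degree_balance G x y
  have hkey := two_mul_eL G
  have hkey' := two_mul_eL (compress G x y)
  have hsum1 := sum_split x y hxy (fun v => (compress G x y).degree v) (fun v => G.degree v)
    (fun v hvx hvy => compress_degree_other G x y hvx hvy)
  have hsum2 := sum_split x y hxy (fun v => (compress G x y).degree v ^ 2)
    (fun v => G.degree v ^ 2)
    (fun v hvx hvy => by simp only [compress_degree_other G x y hvx hvy])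
  set a := #(movedSet G x y) with haA
  set c := #(movedSet G y x) with hcC
  set n := G.degree x - a with hn
  have hdxn : G.degree x = n + a := by omega
  have hdyn : G.degree y = n + c := by omega
  rw [hdx, hdy, hdxn, hdyn] at hsum1 hsum2
  have hac : 1 ≤ a * c := Nat.one_le_iff_ne_zero.mpr
    (Nat.mul_ne_zero (by omega) (by omega))
  nlinarith [hkey, hkey', hsum1, hsum2, hac]
end

section
/- Let n, m be natural numbers with m ≤ C(n,2), and let G be a graph with n vertices and m edges that maximizes the number of edges of the line graph among all graphs with n vertices and m edges. Then G is fully compressed; that is, the vertex set of G can be partitioned into a set K inducing a clique and an independent set I such that every vertex of I has all its neighbours in K and for all u, v ∈ I either N(u) ⊆ N(v) or N(v) ⊆ N(u). -/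
/-!
Since `2 eL(G) + 2 |E(G)| = ∑ᵥ deg(v)²`, a maximiser of `eL` for a fixed number of edges maximises
the sum of squared degrees. If neither `N(x) ⊆ N[y]` nor `N(y) ⊆ N[x]`, pick `a ∈ N(x) \ N[y]` and
`b ∈ N(y) \ N[x]`; when `deg y ≤ deg x`, replacing the edge `yb` by `xb` raises the sum of squared
degrees by `2 (deg x - deg y + 1) > 0` (symmetrically otherwise). So in a maximiser the vicinal
preorder `x ≼ y :⇔ N(x) ⊆ N[y]` is total. In such a graph the complement of a maximum clique `K` is
independent: two adjacent vertices outside `K` could only miss the same vertex `x ∈ K`, and then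
they would both dominate `x`, so that replacing `x` by them enlarges `K`. Nestedness of the
neighbourhoods outside `K` is totality restricted to non-adjacent vertices.
-/

open SimpleGraph

open Finset

namespace SimpleGraph

variable {V : Type*} {G : SimpleGraph V} {a b u v x y : V}

def VicinalLE (G : SimpleGraph V) (x y : V) : Prop :=
  G.neighborSet x ⊆ insert y (G.neighborSet y)

def IsVicinalTotal (G : SimpleGraph V) : Prop :=
  ∀ x y, G.VicinalLE x y ∨ G.VicinalLE y x

def IsFullyCompressed (G : SimpleGraph V) : Prop :=
  ∃ K I : Set V, K ∪ I = Set.univ ∧ K ∩ I = ∅ ∧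
    G.IsClique K ∧
    (∀ u ∈ I, ∀ v ∈ I, ¬ G.Adj u v) ∧
    (∀ u ∈ I, G.neighborSet u ⊆ K) ∧
    (∀ u ∈ I, ∀ v ∈ I, G.neighborSet u ⊆ G.neighborSet v ∨ G.neighborSet v ⊆ G.neighborSet u)

lemma VicinalLE.adj (h : G.VicinalLE x y) (hxa : G.Adj x a) (hay : a ≠ y) : G.Adj y a :=
  (h hxa).resolve_left hay

lemma VicinalLE.neighborSet_subset (h : G.VicinalLE x y) (hxy : ¬G.Adj x y) :
    G.neighborSet x ⊆ G.neighborSet y :=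
  fun _ ha ↦ h.adj ha (by rintro rfl; exact hxy ha)

lemma VicinalLE.isClique_insert_diff (h : G.VicinalLE x u) {K : Set V} (hK : G.IsClique K)
    (hx : x ∈ K) : G.IsClique (insert u (K \ {x})) :=
  (hK.subset Set.sdiff_subset).insert fun _ hz hne ↦ h.adj (hK hx hz.1 (Ne.symm hz.2)) hne.symm

section Finite

variable [Finite V]

lemma IsMaximumClique.exists_not_adj {K : Finset V} (hK : G.IsMaximumClique K) (hu : u ∉ K) :
    ∃ x ∈ K, ¬G.Adj u x := by
  classical
  by_contra! hadj
  have hclique : G.IsClique (insert u K : Finset V) := by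
    rw [coe_insert]
    exact hK.isClique.insert fun x hx _ ↦ hadj x hx
  have := hK.maximum _ hclique
  rw [card_insert_of_notMem hu] at this
  omega

lemma IsMaximumClique.isIndepSet_compl (htot : G.IsVicinalTotal) {K : Finset V}
    (hK : G.IsMaximumClique K) : G.IsIndepSet (↑K)ᶜ := by
  classical
  intro u hu v hv _ huv
  obtain ⟨x, hx, hux⟩ := hK.exists_not_adj hu
  obtain ⟨y, hy, hvy⟩ := hK.exists_not_adj hv
  have hle : ∀ {p q : V}, p ∉ K → G.Adj p q → ¬G.Adj p x → G.VicinalLE x q := fun {p q} hp hpq hpx ↦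
    (htot q x).resolve_left fun h ↦ hpx (h.adj hpq.symm (by rintro rfl; exact hp hx)).symm
  obtain rfl | hxy := eq_or_ne x y
  · have hclique : G.IsClique (insert u (insert v (K.erase x)) : Finset V) := by
      rw [coe_insert, coe_insert, coe_erase]
      refine ((hle hu huv hux).isClique_insert_diff hK.isClique hx).insert ?_
      rintro z (rfl | hz) hne
      · exact huv
      · exact (hle hv huv.symm hvy).adj (hK.isClique hx hz.1 (Ne.symm hz.2)) (Ne.symm hne)
    have hcard := hK.maximum _ hclique
    have hu' : u ∉ K := hu
    have hv' : v ∉ K := hv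
    rw [card_insert_of_notMem (by simp [huv.ne, hu']), card_insert_of_notMem (by simp [hv']),
      card_erase_of_mem hx] at hcard
    have := card_pos.2 ⟨x, hx⟩
    omega
  · exact hvy ((hle hu huv hux).adj (hK.isClique hx hy hxy) (by rintro rfl; exact hv hy))

theorem IsVicinalTotal.isFullyCompressed (htot : G.IsVicinalTotal) : G.IsFullyCompressed := by
  obtain ⟨K, hK⟩ := G.maximumClique_exists
  have hI : ∀ u ∈ (↑K : Set V)ᶜ, ∀ v ∈ (↑K : Set V)ᶜ, ¬G.Adj u v := fun u hu v hv huv ↦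
    hK.isIndepSet_compl htot hu hv huv.ne huv
  refine ⟨K, (↑K)ᶜ, Set.union_compl_self _, Set.inter_compl_self _, hK.isClique, hI, ?_, ?_⟩
  · intro u hu a ha
    by_contra haK
    exact hI u hu a haK ha
  · intro u hu v hv
    exact (htot u v).imp (·.neighborSet_subset (hI u hu v hv)) (·.neighborSet_subset (hI v hv u hu))

end Finite

lemma sum_sq_lt_sum_sq_of_add_single_eq {ι : Type*} [Fintype ι] [DecidableEq ι] {d d' : ι → ℕ}
    {i j : ι} (hij : i ≠ j) (hd : d j ≤ d i) (h : d' + Pi.single j 1 = d + Pi.single i 1) :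
    ∑ k, d k ^ 2 < ∑ k, d' k ^ 2 := by
  have hi := congr_fun h i
  have hj := congr_fun h j
  simp only [Pi.add_apply, Pi.single_eq_same, Pi.single_eq_of_ne hij, Pi.single_eq_of_ne hij.symm]
    at hi hj
  have hrest : ∑ k ∈ (univ.erase i).erase j, d' k ^ 2 = ∑ k ∈ (univ.erase i).erase j, d k ^ 2 :=
    sum_congr rfl fun k hk ↦ by
      have := congr_fun h k
      simp only [Pi.add_apply, Pi.single_eq_of_ne (ne_of_mem_erase hk),
        Pi.single_eq_of_ne (ne_of_mem_erase (mem_of_mem_erase hk))] at this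
      simpa using this
  rw [← add_sum_erase _ _ (mem_univ i), ← add_sum_erase _ _ (mem_erase.2 ⟨hij.symm, mem_univ j⟩),
    ← add_sum_erase _ _ (mem_univ i), ← add_sum_erase _ _ (mem_erase.2 ⟨hij.symm, mem_univ j⟩),
    hrest]
  nlinarith

variable (G) in
lemma sum_natCard_neighborSet [Fintype V] :
    ∑ v, Nat.card (G.neighborSet v) = 2 * Nat.card G.edgeSet := by
  classical
  simp only [Nat.card_eq_fintype_card, card_neighborSet_eq_degree, ← edgeFinset_card]
  exact G.sum_degrees_eq_twice_card_edges

section Counting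

variable [Fintype V] [DecidableEq V] [DecidableRel G.Adj]

lemma sum_sum_mem_eq_sum_degree_mul (f : V → ℕ) :
    ∑ e ∈ G.edgeFinset, ∑ v with v ∈ e, f v = ∑ v, G.degree v * f v := by
  rw [sum_comm' (t' := univ) (s' := fun v ↦ {e ∈ G.edgeFinset | v ∈ e}) (by simp)]
  refine sum_congr rfl fun v _ ↦ ?_
  rw [sum_const, smul_eq_mul, ← incidenceFinset_eq_filter, card_incidenceFinset_eq_degree]

omit [DecidableRel G.Adj] in
lemma sum_mem_sym2_mk {M : Type*} [AddCommMonoid M] (f : V → M) (h : a ≠ b) :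
    ∑ v with v ∈ s(a, b), f v = f a + f b := by
  rw [show ({v | v ∈ s(a, b)} : Finset V) = {a, b} by ext; simp, sum_pair h]

lemma natCard_lineGraph_neighborSet_add_two (e : G.edgeSet) :
    Nat.card (G.lineGraph.neighborSet e) + 2 = ∑ v with v ∈ (e : Sym2 V), G.degree v := by
  obtain ⟨e, he⟩ := e
  induction e using Sym2.ind with | _ a b => ?_
  have hab : G.Adj a b := he
  rw [sum_mem_sym2_mk _ hab.ne]
  have himage : Subtype.val '' G.lineGraph.neighborSet ⟨s(a, b), he⟩ =
      ↑((G.incidenceFinset a ∪ G.incidenceFinset b).erase s(a, b)) := by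
    ext f
    simp only [Set.mem_image, mem_neighborSet, lineGraph_adj_iff_exists, coe_erase, coe_union,
      coe_incidenceFinset]
    constructor
    · rintro ⟨⟨f, hf⟩, ⟨hne, v, hv, hvf⟩, rfl⟩
      refine ⟨?_, fun h ↦ hne (Subtype.ext h.symm)⟩
      rcases Sym2.mem_iff.1 hv with rfl | rfl
      exacts [Or.inl ⟨hf, hvf⟩, Or.inr ⟨hf, hvf⟩]
    · rintro ⟨hf, hne⟩
      refine ⟨⟨f, hf.elim (·.1) (·.1)⟩, ⟨fun h ↦ hne (congrArg Subtype.val h).symm, ?_⟩, rfl⟩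
      rcases hf with ⟨-, hf⟩ | ⟨-, hf⟩
      exacts [⟨a, Sym2.mem_mk_left a b, hf⟩, ⟨b, Sym2.mem_mk_right a b, hf⟩]
  have hinter : G.incidenceFinset a ∩ G.incidenceFinset b = {s(a, b)} := by
    rw [← coe_inj, coe_inter, coe_incidenceFinset, coe_incidenceFinset, coe_singleton,
      G.incidenceSet_inter_incidenceSet_of_adj hab]
  have hmem : s(a, b) ∈ G.incidenceFinset a ∪ G.incidenceFinset b := by
    simp [mem_incidenceFinset, G.mk'_mem_incidenceSet_left_iff, hab]
  rw [Nat.card_coe_set_eq, ← Set.ncard_image_of_injective _ Subtype.val_injective, himage,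
    Set.ncard_coe_finset, ← card_incidenceFinset_eq_degree, ← card_incidenceFinset_eq_degree,
    ← card_union_add_card_inter, hinter, card_singleton, ← card_erase_add_one hmem]

theorem two_mul_eL_add_two_mul_card_edgeFinset :
    2 * eL G + 2 * #G.edgeFinset = ∑ v, G.degree v ^ 2 :=
  calc 2 * eL G + 2 * #G.edgeFinset
      = ∑ e : G.edgeSet, (Nat.card (G.lineGraph.neighborSet e) + 2) := by
        rw [sum_add_distrib, sum_natCard_neighborSet, sum_const, card_univ, edgeFinset_card, eL,
          smul_eq_mul]
        ring
    _ = ∑ e : G.edgeSet, ∑ v with v ∈ (e : Sym2 V), G.degree v :=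
        sum_congr rfl fun e _ ↦ natCard_lineGraph_neighborSet_add_two e
    _ = ∑ e ∈ G.edgeFinset, ∑ v with v ∈ e, G.degree v :=
        (sum_subtype _ (fun _ ↦ mem_edgeFinset) (fun e ↦ ∑ v with v ∈ e, G.degree v)).symm
    _ = ∑ v, G.degree v ^ 2 := by simp only [sum_sum_mem_eq_sum_degree_mul, sq]

lemma degree_add_ite_mem_of_edgeFinset_eq_insert_erase {H : SimpleGraph V} [DecidableRel H.Adj]
    {e e' : Sym2 V} (hE : H.edgeFinset = insert e' (G.edgeFinset.erase e))
    (he : e ∈ G.edgeFinset) (he' : e' ∉ G.edgeFinset) (w : V) :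
    H.degree w + (if w ∈ e then 1 else 0) = G.degree w + (if w ∈ e' then 1 else 0) := by
  rw [← card_incidenceFinset_eq_degree, ← card_incidenceFinset_eq_degree, incidenceFinset_eq_filter,
    incidenceFinset_eq_filter, hE, filter_insert, filter_erase]
  set s := {f ∈ G.edgeFinset | w ∈ f}
  have herase : #(s.erase e) + (if w ∈ e then 1 else 0) = #s := by
    split_ifs with hw
    · exact card_erase_add_one (mem_filter.2 ⟨he, hw⟩)
    · rw [erase_eq_of_notMem (s := s) (a := e) fun h ↦ hw (mem_filter.1 h).2, add_zero]
  have hinsert : #(if w ∈ e' then insert e' (s.erase e) else s.erase e) =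
      #(s.erase e) + (if w ∈ e' then 1 else 0) := by
    split_ifs
    · exact card_insert_of_notMem fun h ↦ he' (mem_filter.1 (mem_of_mem_erase h)).1
    · rfl
  omega

lemma exists_eL_lt_of_degree_le {u v b : V} (hvb : G.Adj v b) (hub : ¬G.Adj u b) (hne : u ≠ b)
    (huv : u ≠ v) (hd : G.degree v ≤ G.degree u) :
    ∃ H : SimpleGraph V, Nat.card H.edgeSet = Nat.card G.edgeSet ∧ eL G < eL H := by
  classical
  obtain ⟨H, hE⟩ : ∃ H : SimpleGraph V, H.edgeSet = insert s(u, b) (G.edgeSet \ {s(v, b)}) :=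
    ⟨G.deleteEdges {s(v, b)} ⊔ edge u b, by
      rw [edgeSet_sup, edgeSet_deleteEdges, edgeSet_edge_of_ne hne, Set.union_singleton]⟩
  replace hE : H.edgeFinset = insert s(u, b) (G.edgeFinset.erase s(v, b)) := by
    ext e
    simp [hE, and_comm]
  have hvb' : s(v, b) ∈ G.edgeFinset := by simpa using hvb
  have hub' : s(u, b) ∉ G.edgeFinset := by simpa using hub
  have hcard : #H.edgeFinset = #G.edgeFinset := by
    rw [hE, card_insert_of_notMem (fun h ↦ hub' (mem_of_mem_erase h)), card_erase_add_one hvb']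
  have hdeg : (fun w ↦ H.degree w) + Pi.single v 1 = (fun w ↦ G.degree w) + Pi.single u 1 := by
    funext w
    have := degree_add_ite_mem_of_edgeFinset_eq_insert_erase hE hvb' hub' w
    by_cases hwb : w = b
    · subst hwb
      simp_all [hne.symm, hvb.ne.symm]
    · simp_all [Pi.single_apply]
  refine ⟨H, by simpa only [Nat.card_eq_fintype_card, edgeFinset_card] using hcard, ?_⟩
  have := sum_sq_lt_sum_sq_of_add_single_eq huv hd hdeg
  have := G.two_mul_eL_add_two_mul_card_edgeFinset
  have := H.two_mul_eL_add_two_mul_card_edgeFinset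
  omega

end Counting

lemma isVicinalTotal_of_forall_eL_le [Finite V]
    (hmax : ∀ H : SimpleGraph V, Nat.card H.edgeSet = Nat.card G.edgeSet → eL H ≤ eL G) :
    G.IsVicinalTotal := by
  classical
  cases nonempty_fintype V
  have degree_lt : ∀ {p q c : V}, G.Adj q c → ¬G.Adj p c → p ≠ c → p ≠ q →
      G.degree p < G.degree q := fun hqc hpc hpc' hpq ↦ by
    by_contra! hd
    obtain ⟨H, hH, hlt⟩ := exists_eL_lt_of_degree_le hqc hpc hpc' hpq hd
    exact (hmax H hH).not_gt hlt
  intro x y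
  by_contra! h
  obtain ⟨⟨a, hxa, hay⟩, ⟨b, hyb, hbx⟩⟩ := And.imp Set.not_subset.1 Set.not_subset.1 h
  simp only [Set.mem_insert_iff, mem_neighborSet, not_or] at hay hbx
  have hxy : x ≠ y := by rintro rfl; exact hay.2 hxa
  have := degree_lt hyb hbx.2 (Ne.symm hbx.1) hxy
  have := degree_lt hxa hay.2 (Ne.symm hay.1) hxy.symm
  omega

end SimpleGraph

theorem maximizer_of_lineGraph_edges_is_fully_compressed_general (n m : ℕ)
    (G : SimpleGraph (Fin n)) (hG : Nat.card G.edgeSet = m)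
    (hmax : ∀ H : SimpleGraph (Fin n), Nat.card H.edgeSet = m → eL H ≤ eL G) :
    ∃ K I : Set (Fin n), K ∪ I = Set.univ ∧ K ∩ I = ∅ ∧
      G.IsClique K ∧
      (∀ u ∈ I, ∀ v ∈ I, ¬ G.Adj u v) ∧
      (∀ u ∈ I, G.neighborSet u ⊆ K) ∧
      (∀ u ∈ I, ∀ v ∈ I,
        G.neighborSet u ⊆ G.neighborSet v ∨ G.neighborSet v ⊆ G.neighborSet u) :=
  (isVicinalTotal_of_forall_eL_le fun H hH ↦ hmax H (hH.trans hG)).isFullyCompressed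

/-- A graph with `n` vertices and `m` edges which maximises the number of edges of the line
graph among all graphs with `n` vertices and `m` edges is fully compressed: its vertex set is
partitioned into a clique `K` and an independent set `I` all of whose neighbourhoods lie in `K`
and are nested. -/
theorem maximizer_of_lineGraph_edges_is_fully_compressed (n m : ℕ) (hm : m ≤ n * (n - 1) / 2)
    (G : SimpleGraph (Fin n)) (hG : Nat.card G.edgeSet = m)
    (hmax : ∀ H : SimpleGraph (Fin n), Nat.card H.edgeSet = m → eL H ≤ eL G) :
    ∃ K I : Set (Fin n), K ∪ I = Set.univ ∧ K ∩ I = ∅ ∧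
      G.IsClique K ∧
      (∀ u ∈ I, ∀ v ∈ I, ¬ G.Adj u v) ∧
      (∀ u ∈ I, G.neighborSet u ⊆ K) ∧
      (∀ u ∈ I, ∀ v ∈ I,
        G.neighborSet u ⊆ G.neighborSet v ∨ G.neighborSet v ⊆ G.neighborSet u) :=
  maximizer_of_lineGraph_edges_is_fully_compressed_general n m G hG hmax
end

section
/- Let G be a finite simple graph and x, y distinct vertices. For every natural number r ≥ 1, the number of cliques of size r in G is at most the number of cliques of size r in C_{xy}(G). In particular, compression cannot decrease the total number of cliques of a graph. -/
open SimpleGraph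

/-- The total number of cliques (of all sizes ≥ 1) of a graph. -/
noncomputable def numCliques {V : Type*} (G : SimpleGraph V) : ℕ :=
  Nat.card {s : Finset V // s.Nonempty ∧ G.IsClique (s : Set V)}

/-!
Compression moves a set `s ∋ x` with `y ∉ s` to `(s \ {x}) ∪ {y}` exactly when some `v ∈ s \ {x}`
is not adjacent to `y`, and fixes every other set. This sends cliques of `G` to cliques of
`C_{xy}(G)` of the same size, and is injective on cliques of `G`: a clique that is moved becomes
a set containing the non-adjacent pair `y, v`, so it cannot collide with a clique that is fixed.
-/

section CompressFinset

variable {V : Type*} (G : SimpleGraph V) {x y a b : V} {s : Finset V}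

def IsCompressible (x y : V) (s : Finset V) : Prop :=
  x ∈ s ∧ y ∉ s ∧ ∃ v ∈ s, v ≠ x ∧ ¬ G.Adj y v

variable {G}

lemma compress_adj_of_adj (h : G.Adj a b) (ha : a = x → b = y ∨ G.Adj y b)
    (hb : b = x → a = y ∨ G.Adj y a) : (compress G x y).Adj a b := by
  refine Or.inl ⟨h, ?_⟩
  rintro (⟨hax, hby, hyb⟩ | ⟨hbx, hay, hya⟩)
  · exact (ha hax).elim hby hyb
  · exact (hb hbx).elim hay hya

lemma compress_adj_of_adj_left (hxb : G.Adj x b) (hby : b ≠ y) (hyx : y ≠ x) :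
    (compress G x y).Adj y b := by
  by_cases hyb : G.Adj y b
  · exact compress_adj_of_adj hyb (fun h => absurd h hyx) (fun h => absurd h hxb.ne.symm)
  · exact Or.inr (Or.inl ⟨rfl, hby, hxb, hyb⟩)

variable [DecidableEq V]

variable (G) in
open Classical in
noncomputable def compressFinset (x y : V) (s : Finset V) : Finset V :=
  if IsCompressible G x y s then insert y (s.erase x) else s

lemma compressFinset_of_isCompressible (h : IsCompressible G x y s) :
    compressFinset G x y s = insert y (s.erase x) := by
  simp only [compressFinset, if_pos h]

lemma compressFinset_of_not_isCompressible (h : ¬ IsCompressible G x y s) :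
    compressFinset G x y s = s := by
  simp only [compressFinset, if_neg h]

lemma card_compressFinset : (compressFinset G x y s).card = s.card := by
  by_cases h : IsCompressible G x y s
  · rw [compressFinset_of_isCompressible h,
      Finset.card_insert_of_notMem fun hy => h.2.1 (Finset.mem_of_mem_erase hy),
      Finset.card_erase_add_one h.1]
  · rw [compressFinset_of_not_isCompressible h]

theorem SimpleGraph.IsClique.compressFinset (hs : G.IsClique (s : Set V)) :
    (compress G x y).IsClique (compressFinset G x y s : Set V) := by
  by_cases h : IsCompressible G x y s
  · rw [compressFinset_of_isCompressible h, Finset.coe_insert, isClique_insert]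
    obtain ⟨hx, hy, -⟩ := h
    have hyx : y ≠ x := fun hyx => hy (hyx ▸ hx)
    constructor
    · intro a ha b hb hab
      rw [Finset.coe_erase] at ha hb
      exact compress_adj_of_adj (hs ha.1 hb.1 hab) (fun h => absurd h ha.2) (fun h => absurd h hb.2)
    · intro b hb _
      rw [Finset.mem_coe, Finset.mem_erase] at hb
      exact compress_adj_of_adj_left (hs hx hb.2 (Ne.symm hb.1)) (fun h => hy (h ▸ hb.2)) hyx
  · rw [compressFinset_of_not_isCompressible h]
    have keep {a b : V} (ha : a ∈ s) (hb : b ∈ s) (hab : a ≠ b) : a = x → b = y ∨ G.Adj y b := by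
      rintro rfl
      by_cases hys : y ∈ s
      · exact or_iff_not_imp_left.2 fun hby => hs hys hb (Ne.symm hby)
      · by_contra! hyb
        exact h ⟨ha, hys, b, hb, Ne.symm hab, hyb.2⟩
    intro a ha b hb hab
    exact compress_adj_of_adj (hs ha hb hab) (keep ha hb hab) (keep hb ha (Ne.symm hab))

lemma not_isClique_compressFinset (h : IsCompressible G x y s) :
    ¬ G.IsClique (compressFinset G x y s : Set V) := by
  rw [compressFinset_of_isCompressible h]
  obtain ⟨-, hy, v, hv, hvx, hyv⟩ := h
  intro hc
  refine hyv (hc (Finset.mem_insert_self y _) ?_ fun h => hy (h ▸ hv))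
  exact Finset.mem_insert_of_mem (Finset.mem_erase.2 ⟨hvx, hv⟩)

lemma injOn_compressFinset :
    Set.InjOn (compressFinset G x y) {s | G.IsClique (s : Set V)} := by
  intro s hs t ht hst
  by_cases hcs : IsCompressible G x y s <;> by_cases hct : IsCompressible G x y t
  · rw [compressFinset_of_isCompressible hcs, compressFinset_of_isCompressible hct] at hst
    obtain ⟨hxs, hys, -⟩ := hcs
    obtain ⟨hxt, hyt, -⟩ := hct
    have herase : s.erase x = t.erase x := by
      simpa [Finset.erase_insert fun h => hys (Finset.mem_of_mem_erase h),
        Finset.erase_insert fun h => hyt (Finset.mem_of_mem_erase h)] using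
        congrArg (Finset.erase · y) hst
    rw [← Finset.insert_erase hxs, ← Finset.insert_erase hxt, herase]
  · rw [compressFinset_of_not_isCompressible hct] at hst
    exact absurd (hst ▸ ht) (not_isClique_compressFinset hcs)
  · rw [compressFinset_of_not_isCompressible hcs] at hst
    exact absurd (hst ▸ hs) (not_isClique_compressFinset hct)
  · rwa [compressFinset_of_not_isCompressible hcs, compressFinset_of_not_isCompressible hct] at hst

end CompressFinset

lemma natCard_subtype_le_of_injOn {α : Type*} [Finite α] {P Q : α → Prop} (f : α → α)
    (hf : ∀ a, P a → Q (f a)) (hinj : Set.InjOn f {a | P a}) :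
    Nat.card {a // P a} ≤ Nat.card {a // Q a} :=
  Set.ncard_le_ncard_of_injOn f hf hinj (Set.toFinite _)

theorem compress_cliques_general {V : Type*} [Fintype V] (G : SimpleGraph V) (x y : V) :
    (∀ r : ℕ, 1 ≤ r →
      Nat.card {s : Finset V // G.IsNClique r s}
        ≤ Nat.card {s : Finset V // (compress G x y).IsNClique r s}) ∧
    numCliques G ≤ numCliques (compress G x y) := by
  classical
  constructor
  · intro r _
    refine natCard_subtype_le_of_injOn (compressFinset G x y)
      (fun s hs => ⟨hs.isClique.compressFinset, card_compressFinset.trans hs.card_eq⟩)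
      (injOn_compressFinset.mono fun s hs => hs.isClique)
  · refine natCard_subtype_le_of_injOn (compressFinset G x y)
      (fun s hs => ⟨?_, hs.2.compressFinset⟩) (injOn_compressFinset.mono fun s hs => hs.2)
    rw [← Finset.card_pos, card_compressFinset]
    exact hs.1.card_pos

/-- For every `r ≥ 1`, the number of cliques of size `r` in `G` is at most the number of
cliques of size `r` in `C_{xy}(G)`; in particular compression cannot decrease the total
number of cliques. -/
theorem compress_cliques {V : Type*} [Fintype V] (G : SimpleGraph V) (x y : V) (hxy : x ≠ y) :
    (∀ r : ℕ, 1 ≤ r →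
      Nat.card {s : Finset V // G.IsNClique r s}
        ≤ Nat.card {s : Finset V // (compress G x y).IsNClique r s}) ∧
    numCliques G ≤ numCliques (compress G x y) :=
  compress_cliques_general G x y
end

section
/- Path Switching Lemma: Let V be a finite set, let r be a relation on V such that the digraph (V, r) has no directed cycle, and let a, b ∈ V. Define the path-switched relation r' on V by: r'(u,v) holds iff either (r(u,v) holds and it is not the case that both u is reachable from a and b is reachable from v in (V,r)), or (r(v,u) holds and both v is reachable from a and b is reachable from u in (V,r)). Then the digraph (V, r') has no directed cycle. -/
/-- **Path Switching Lemma.** Let `r` be a relation on a finite set `V` whose digraph has no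
directed cycle, and let `a b : V`.  The path-switched relation `r'`, which reverses exactly
those edges lying on a directed path from `a` to `b` (i.e. edges `(u,v)` with `u` reachable
from `a` and `b` reachable from `v`), again has no directed cycle. -/
theorem path_switching {V : Type*} [Fintype V] (r : V → V → Prop)
    (hr : ∀ v, ¬ Relation.TransGen r v v) (a b : V) :
    ∀ v, ¬ Relation.TransGen
      (fun u w =>
        (r u w ∧ ¬ (Relation.ReflTransGen r a u ∧ Relation.ReflTransGen r w b)) ∨
        (r w u ∧ Relation.ReflTransGen r a w ∧ Relation.ReflTransGen r u b))
      v v := by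
  classical
  set r' : V → V → Prop := (fun u w =>
        (r u w ∧ ¬ (Relation.ReflTransGen r a u ∧ Relation.ReflTransGen r w b)) ∨
        (r w u ∧ Relation.ReflTransGen r a w ∧ Relation.ReflTransGen r u b)) with hr'def
  set S : V → Prop := fun v => Relation.ReflTransGen r a v ∧ Relation.ReflTransGen r v b
    with hSdef
  set ρ : V → ℕ := fun v =>
    if Relation.ReflTransGen r a v then (if Relation.ReflTransGen r v b then 1 else 2) else 0
    with hρdef
  -- edge classification
  have hedge : ∀ u w, r' u w → (S u ∧ S w ∧ r w u) ∨ (r u w ∧ ¬ (S u ∧ S w)) := by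
    intro u w h
    rcases h with ⟨h1, h2⟩ | ⟨h1, h2, h3⟩
    · right
      exact ⟨h1, fun hS => h2 ⟨hS.1.1, hS.2.2⟩⟩
    · left
      exact ⟨⟨h2.tail h1, h3⟩, ⟨h2, Relation.ReflTransGen.head h1 h3⟩, h1⟩
  -- per-edge step lemma
  have hstep : ∀ u w, r' u w →
      ρ u ≤ ρ w ∧ (ρ u = ρ w → ((ρ u = 1 ∧ r w u) ∨ (ρ u ≠ 1 ∧ r u w))) := by
    intro u w h
    rcases hedge u w h with ⟨⟨hAu, hBu⟩, ⟨hAw, hBw⟩, hwu⟩ | ⟨huw, hnS⟩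
    · have h1 : ρ u = 1 := by simp [hρdef, hAu, hBu]
      have h2 : ρ w = 1 := by simp [hρdef, hAw, hBw]
      rw [h1, h2]
      exact ⟨le_refl 1, fun _ => Or.inl ⟨rfl, hwu⟩⟩
    · have hAprop : Relation.ReflTransGen r a u → Relation.ReflTransGen r a w :=
        fun h => h.tail huw
      have hBprop : Relation.ReflTransGen r w b → Relation.ReflTransGen r u b :=
        fun h => Relation.ReflTransGen.head huw h
      by_cases hAu : Relation.ReflTransGen r a u
      · have hAw : Relation.ReflTransGen r a w := hAprop hAu
        by_cases hBu : Relation.ReflTransGen r u b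
        · -- S u holds; so ¬ S w, i.e. ¬ B w
          have hBw : ¬ Relation.ReflTransGen r w b := by
            intro hBw
            exact hnS ⟨⟨hAu, hBu⟩, ⟨hAw, hBw⟩⟩
          have h1 : ρ u = 1 := by simp [hρdef, hAu, hBu]
          have h2 : ρ w = 2 := by simp [hρdef, hAw, hBw]
          rw [h1, h2]
          exact ⟨by norm_num, fun h => by omega⟩
        · have hBw : ¬ Relation.ReflTransGen r w b := fun h => hBu (hBprop h)
          have h1 : ρ u = 2 := by simp [hρdef, hAu, hBu]
          have h2 : ρ w = 2 := by simp [hρdef, hAw, hBw]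
          rw [h1, h2]
          exact ⟨le_refl 2, fun _ => Or.inr ⟨by norm_num, huw⟩⟩
      · have h1 : ρ u = 0 := by simp [hρdef, hAu]
        rw [h1]
        exact ⟨Nat.zero_le _, fun h => Or.inr ⟨by norm_num, huw⟩⟩
  -- main lemma by induction on TransGen
  have hmain : ∀ u w, Relation.TransGen r' u w →
      ρ u ≤ ρ w ∧ (ρ u = ρ w →
        ((ρ u = 1 ∧ Relation.TransGen r w u) ∨ (ρ u ≠ 1 ∧ Relation.TransGen r u w))) := by
    intro u w h
    induction h with
    | single h =>
      obtain ⟨hle, heq⟩ := hstep _ _ h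
      refine ⟨hle, fun he => ?_⟩
      rcases heq he with ⟨h1, hwu⟩ | ⟨h1, huw⟩
      · exact Or.inl ⟨h1, Relation.TransGen.single hwu⟩
      · exact Or.inr ⟨h1, Relation.TransGen.single huw⟩
    | @tail w' x hT hedge' ih =>
      obtain ⟨hle1, heq1⟩ := ih
      obtain ⟨hle2, heq2⟩ := hstep _ _ hedge'
      refine ⟨le_trans hle1 hle2, fun he => ?_⟩
      have e1 : ρ u = ρ w' := le_antisymm hle1 (by omega)
      have e2 : ρ w' = ρ x := by omega
      rcases heq1 e1 with ⟨h1, hT1⟩ | ⟨h1, hT1⟩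
      · rcases heq2 e2 with ⟨_, hxw⟩ | ⟨h2, _⟩
        · exact Or.inl ⟨h1, hT1.head hxw⟩
        · exact absurd (e1 ▸ h1) h2
      · rcases heq2 e2 with ⟨h2, _⟩ | ⟨_, hwx⟩
        · exact absurd (e1 ▸ h2) h1
        · exact Or.inr ⟨h1, hT1.tail hwx⟩
  intro v hv
  rcases (hmain v v hv).2 rfl with ⟨_, hc⟩ | ⟨_, hc⟩ <;> exact hr v hc
end

section
/- Let G = H(k, n_0, ..., n_{k-1}) with Σ_{i=1}^{k-1} n_i ≥ 2, and let G' be the consolidation of G. Then the total number of cliques of G' is strictly greater than the total number of cliques of G. -/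
open SimpleGraph

def graphH (k : ℕ) (ns : ℕ → ℕ) :
    SimpleGraph (Fin k ⊕ Σ i : Fin k, Fin (ns i.val)) where
  Adj a b :=
    match a, b with
    | Sum.inl u, Sum.inl v => u ≠ v
    | Sum.inl u, Sum.inr p => u.val < p.1.val
    | Sum.inr p, Sum.inl u => u.val < p.1.val
    | Sum.inr _, Sum.inr _ => False
  symm := by
    constructor
    rintro (u | p) (v | q) h
    · exact h.symm
    · exact h
    · exact h
    · exact h
  loopless := by
    constructor
    rintro (u | p) h
    · exact h rfl
    · exact h

/-- The clique size of the consolidation of `H(k, n_0, …, n_{k-1})` with largest relevant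
index `l`: if `l = k - 1` the vertex receiving degree `k` is absorbed into the clique. -/
def consolK (k l : ℕ) : ℕ := if l = k - 1 then k + 1 else k

/-- The degree sequence of the consolidation: `n_s` and `n_l` are decreased by one and
`n_{s-1}` and `n_{l+1}` are increased by one (no vertex of degree `l + 1 = k` is recorded,
since such a vertex is absorbed into the clique). -/
def consolNs (k : ℕ) (ns : ℕ → ℕ) (s l : ℕ) : ℕ → ℕ := fun i =>
  (if i = s - 1 then 1 else 0) + (if l + 1 < k ∧ i = l + 1 then 1 else 0) + ns i
    - (if i = s then 1 else 0) - (if i = l then 1 else 0)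

/-- The data of a nontrivial consolidation move on `H(k, n_0, …, n_{k-1})`:  `k ≥ 1`, only
`n_0, …, n_{k-1}` are (possibly) nonzero, `Σ_{i=1}^{k-1} n_i ≥ 2`, `s` is the least index
`i ≥ 1` with `n_i > 0`, and `l` is the greatest index `i ≤ k - 1` with `n_i > 0`. -/
def IsConsolData (k : ℕ) (ns : ℕ → ℕ) (s l : ℕ) : Prop :=
  1 ≤ k ∧ (∀ i, k ≤ i → ns i = 0) ∧ 2 ≤ ∑ i ∈ Finset.Ico 1 k, ns i ∧
    1 ≤ s ∧ ns s ≠ 0 ∧ (∀ i, 1 ≤ i → i < s → ns i = 0) ∧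
    ns l ≠ 0 ∧ (∀ i, l < i → i < k → ns i = 0)

/-! A graph whose vertex set splits into a clique `C` and an independent set `I` has
`2 ^ |C| - 1 + ∑ v ∈ I, 2 ^ deg v` nonempty cliques: a clique meets `I` in at most one vertex
`v`, and then the rest of it is an arbitrary subset of the neighbourhood of `v`, which lies
in `C`. For `H(k, n)` this gives `2 ^ k - 1 + ∑ i < k, n i * 2 ^ i`, so consolidation changes
the count by `2 ^ (s - 1) + 2 ^ (l + 1) - 2 ^ s - 2 ^ l = 2 ^ l - 2 ^ (s - 1) > 0`; when
`l = k - 1` the term `2 ^ (l + 1)` comes from the growth of the clique instead. When `s = l`,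
`∑ n i ≥ 2` forces `n s ≥ 2`, so both decrements are genuine. -/

open Finset

namespace SimpleGraph

variable {V : Type*} [Fintype V] [DecidableEq V] (G : SimpleGraph V) [DecidableRel G.Adj]

lemma numCliques_eq_card :
    numCliques G = #{t : Finset V | t.Nonempty ∧ G.IsClique (t : Set V)} := by
  rw [numCliques, Nat.card_eq_fintype_card, Fintype.card_subtype]

lemma card_isClique_mem_eq_two_pow_degree (v : V) (hN : G.IsClique (G.neighborSet v)) :
    #{t : Finset V | G.IsClique (t : Set V) ∧ v ∈ t} = 2 ^ G.degree v := by
  rw [← card_neighborFinset_eq_degree, ← card_powerset]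
  refine card_nbij' (fun t => t.erase v) (insert v) ?_ ?_ ?_ ?_
  · intro t ht
    simp only [coe_filter, mem_univ, true_and, Set.mem_ofPred_eq] at ht
    rw [mem_coe, mem_powerset]
    intro u hu
    obtain ⟨huv, hut⟩ := mem_erase.1 hu
    exact (G.mem_neighborFinset v u).2 (ht.1 ht.2 hut huv.symm)
  · intro u hu
    have hu : u ⊆ G.neighborFinset v := mem_powerset.1 hu
    simp only [coe_filter, mem_univ, true_and, Set.mem_ofPred_eq, coe_insert]
    refine ⟨isClique_insert.2 ⟨hN.subset fun w hw => ?_, fun w hw _ => ?_⟩, mem_insert_self v u⟩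
    · simpa using hu hw
    · simpa using hu hw
  · intro t ht
    simp only [coe_filter, mem_univ, true_and, Set.mem_ofPred_eq] at ht
    exact insert_erase ht.2
  · intro u hu
    exact erase_insert fun hv => G.notMem_neighborFinset_self v (mem_powerset.1 hu hv)

theorem numCliques_eq_of_isIndepSet_of_isClique_compl (I : Finset V)
    (hI : G.IsIndepSet (I : Set V)) (hC : G.IsClique (I : Set V)ᶜ) :
    numCliques G = (2 ^ #Iᶜ - 1) + ∑ v ∈ I, 2 ^ G.degree v := by
  rw [numCliques_eq_card, ← card_filter_add_card_filter_not (fun t => Disjoint t I), filter_filter,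
    filter_filter]
  congr 1
  · have hdisj : ({t | (t.Nonempty ∧ G.IsClique (t : Set V)) ∧ Disjoint t I} : Finset (Finset V))
        = Iᶜ.powerset.erase ∅ := by
      ext t
      simp only [mem_filter, mem_univ, true_and, mem_erase, mem_powerset,
        subset_compl_iff_disjoint_right, ← nonempty_iff_ne_empty]
      refine ⟨fun h => ⟨h.1.1, h.2⟩, fun h => ⟨⟨h.1, hC.subset ?_⟩, h.2⟩⟩
      simpa [← coe_compl] using subset_compl_iff_disjoint_right.2 h.2
    rw [hdisj, card_erase_of_mem (empty_mem_powerset _), card_powerset]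
  · have hmeet : ({t | (t.Nonempty ∧ G.IsClique (t : Set V)) ∧ ¬ Disjoint t I} : Finset (Finset V))
        = I.biUnion fun v => ({t | G.IsClique (t : Set V) ∧ v ∈ t} : Finset (Finset V)) := by
      ext t
      simp only [mem_filter, mem_univ, true_and, mem_biUnion, not_disjoint_iff]
      constructor
      · rintro ⟨⟨-, ht⟩, v, hvt, hvI⟩
        exact ⟨v, hvI, ht, hvt⟩
      · rintro ⟨v, hvI, ht, hvt⟩
        exact ⟨⟨⟨v, hvt⟩, ht⟩, v, hvt, hvI⟩
    rw [hmeet, card_biUnion]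
    · refine sum_congr rfl fun v hv => G.card_isClique_mem_eq_two_pow_degree v (hC.subset ?_)
      intro w hw hwI
      exact hI hv hwI (G.ne_of_adj hw) hw
    · intro v hv w hw hvw
      refine Finset.disjoint_left.2 fun t hvt hwt => ?_
      simp only [mem_filter, mem_univ, true_and] at hvt hwt
      exact hI hv hw hvw (hvt.1 hvt.2 hwt.2 hvw)

end SimpleGraph

section graphH

variable (k : ℕ) (ns : ℕ → ℕ)

lemma degree_graphH_inr [DecidableRel (graphH k ns).Adj] (p : Σ i : Fin k, Fin (ns i)) :
    (graphH k ns).degree (Sum.inr p) = p.1 := by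
  have hN : (graphH k ns).neighborFinset (Sum.inr p) = (Iio p.1).map Function.Embedding.inl := by
    ext (u | q) <;> rw [mem_neighborFinset] <;> simp [graphH]
  rw [← card_neighborFinset_eq_degree, hN, card_map, Fin.card_Iio]

theorem numCliques_graphH :
    numCliques (graphH k ns) = 2 ^ k - 1 + ∑ i ∈ range k, ns i * 2 ^ i := by
  classical
  set I : Finset (Fin k ⊕ Σ i : Fin k, Fin (ns i)) := univ.map ⟨Sum.inr, Sum.inr_injective⟩
  have hI : (graphH k ns).IsIndepSet (I : Set _) := by
    simp [I, IsIndepSet, Set.Pairwise, graphH]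
  have hC : (graphH k ns).IsClique (I : Set _)ᶜ := by
    rintro (u | p) hu (v | q) hv huv <;> simp_all [I, graphH]
  have hIc : #Iᶜ = k := by simp [I, card_compl]
  rw [numCliques_eq_of_isIndepSet_of_isClique_compl _ I hI hC, hIc, sum_map]
  simp only [Function.Embedding.coeFn_mk, degree_graphH_inr, Fintype.sum_sigma, sum_const,
    card_univ, Fintype.card_fin, smul_eq_mul]
  rw [Fin.sum_univ_eq_sum_range (fun i => ns i * 2 ^ i)]

end graphH

namespace IsConsolData

variable {k : ℕ} {ns : ℕ → ℕ} {s l : ℕ}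

lemma lt_of_ne_zero (h : IsConsolData k ns s l) {i : ℕ} (hi : ns i ≠ 0) : i < k := by
  by_contra! hki
  exact hi (h.2.1 i hki)

lemma s_lt (h : IsConsolData k ns s l) : s < k := h.lt_of_ne_zero h.2.2.2.2.1

lemma l_lt (h : IsConsolData k ns s l) : l < k := h.lt_of_ne_zero h.2.2.2.2.2.2.1

lemma s_le_l (h : IsConsolData k ns s l) : s ≤ l := by
  by_contra! hls
  exact h.2.2.2.2.1 (h.2.2.2.2.2.2.2 s hls h.s_lt)

lemma two_le_of_eq (h : IsConsolData k ns s l) (hsl : s = l) : 2 ≤ ns s := by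
  have hsk : s < k := h.s_lt
  obtain ⟨-, -, hsum, hs1, -, hmin, -, hmax⟩ := h
  suffices ∑ i ∈ Ico 1 k, ns i = ns s by omega
  refine sum_eq_single_of_mem s (mem_Ico.2 ⟨hs1, hsk⟩) fun i hi his => ?_
  rcases lt_or_gt_of_ne his with hlt | hgt
  · exact hmin i (mem_Ico.1 hi).1 hlt
  · exact hmax i (hsl ▸ hgt) (mem_Ico.1 hi).2

end IsConsolData

-- The decrements are moved to the left so that no truncated subtraction occurs.
lemma consolNs_add_ite {k : ℕ} {ns : ℕ → ℕ} {s l : ℕ} (hs : ns s ≠ 0) (hl : ns l ≠ 0)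
    (hsl : s = l → 2 ≤ ns s) (i : ℕ) :
    consolNs k ns s l i + (if i = s then 1 else 0) + (if i = l then 1 else 0) =
      ns i + (if i = s - 1 then 1 else 0) + (if l + 1 < k ∧ i = l + 1 then 1 else 0) := by
  unfold consolNs
  split_ifs <;> first | omega | (subst_vars; omega)

lemma IsConsolData.sum_consolNs_mul_pow {k : ℕ} {ns : ℕ → ℕ} {s l : ℕ}
    (h : IsConsolData k ns s l) {K : ℕ} (hK : k ≤ K) :
    ∑ i ∈ range K, consolNs k ns s l i * 2 ^ i + 2 ^ s + 2 ^ l =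
      ∑ i ∈ range K, ns i * 2 ^ i + 2 ^ (s - 1) + if l + 1 < k then 2 ^ (l + 1) else 0 := by
  have hsK : s < K := h.s_lt.trans_le hK
  have hlK : l < K := h.l_lt.trans_le hK
  have hsl := h.two_le_of_eq
  obtain ⟨-, -, -, -, hs, -, hl, -⟩ := h
  have hsum := sum_congr rfl fun i (_ : i ∈ range K) => congrArg (· * 2 ^ i)
    (consolNs_add_ite (k := k) hs hl hsl i)
  simp only [add_mul, ite_mul, one_mul, zero_mul, sum_add_distrib, sum_ite_eq', ite_and] at hsum
  by_cases hlk : l + 1 < k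
  · simp [hlk, hsK, hlK, (show s - 1 < K by omega), (show l + 1 < K by omega)] at hsum ⊢
    omega
  · simp [hlk, hsK, hlK, (show s - 1 < K by omega)] at hsum ⊢
    omega

lemma le_consolK (k l : ℕ) : k ≤ consolK k l := by
  unfold consolK
  split_ifs <;> omega

lemma two_pow_consolK_add {k l : ℕ} (hl : l < k) :
    2 ^ consolK k l + (if l + 1 < k then 2 ^ (l + 1) else 0) = 2 ^ k + 2 ^ (l + 1) := by
  unfold consolK
  split_ifs
  · omega
  · rw [pow_succ, show l + 1 = k by omega]; ring
  · rfl
  · omega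

/-- The total number of cliques is strictly increased by (nontrivial) consolidation. -/
theorem consolidation_lt_numCliques (k : ℕ) (ns : ℕ → ℕ) (s l : ℕ)
    (h : IsConsolData k ns s l) :
    numCliques (graphH k ns) < numCliques (graphH (consolK k l) (consolNs k ns s l)) := by
  rw [numCliques_graphH, numCliques_graphH]
  have hsum := h.sum_consolNs_mul_pow (le_consolK k l)
  have hpow := two_pow_consolK_add h.l_lt
  have hsl : s ≤ l := h.s_le_l
  obtain ⟨-, hzero, -, hs1, -, -, -, -⟩ := h
  have hext : ∑ i ∈ range (consolK k l), ns i * 2 ^ i = ∑ i ∈ range k, ns i * 2 ^ i :=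
    (sum_subset (range_subset_range.2 (le_consolK k l)) fun i _ hi =>
      by rw [hzero i (by simpa using hi), zero_mul]).symm
  have hs : 2 ^ s = 2 * 2 ^ (s - 1) := by rw [← pow_succ', Nat.sub_add_cancel hs1]
  have hl : 2 ^ (l + 1) = 2 * 2 ^ l := pow_succ' 2 l
  have hlt : 2 ^ (s - 1) < 2 ^ l := Nat.pow_lt_pow_right (by norm_num) (by omega)
  have hk : 1 ≤ 2 ^ k := Nat.one_le_two_pow
  rw [hext] at hsum
  split_ifs at hsum hpow <;> omega
end

section
/- The number of acyclic orientations of the graph G = H(k, n_0, n_1, ..., n_{k-1}) is a(G) = k! · Π_{i=0}^{k-1} (i+1)^{n_i}. -/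
open SimpleGraph

/-- An orientation of a simple graph `G`: a relation `θ` on the vertices such that for adjacent
vertices exactly one of `θ a b`, `θ b a` holds, and for non-adjacent (or equal) vertices
neither holds. -/
def IsOrientation {V : Type*} (G : SimpleGraph V) (θ : V → V → Prop) : Prop :=
  ∀ a b : V, (G.Adj a b → (θ a b ↔ ¬ θ b a)) ∧ (¬ G.Adj a b → ¬ θ a b)

/-- A relation is acyclic if its digraph has no directed cycle, i.e. its transitive closure is
irreflexive. -/
def RelAcyclic {V : Type*} (θ : V → V → Prop) : Prop :=
  ∀ v, ¬ Relation.TransGen θ v v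

/-- `a(G)`, the number of acyclic orientations of `G`. -/
noncomputable def numAcyclicOrientations {V : Type*} (G : SimpleGraph V) : ℕ :=
  Nat.card {θ : V → V → Prop // IsOrientation G θ ∧ RelAcyclic θ}

/-!
`H(k, n_0, …, n_{k-1})` is a split graph: the `v_i` form a clique and the remaining vertices an
independent set, each attached to part of the clique. An acyclic orientation of a split graph
restricts to a linear order of the clique, and the in-neighbours of an independent vertex `p`
form an initial segment of `N(p)` for that order (otherwise a directed triangle appears).
Conversely such data always gives an acyclic orientation, since a suitable height function
increases along every arrow. A chain of `d` elements has `d + 1` initial segments, so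
`a(G) = |C|! · ∏_p (deg p + 1)`.
-/

open Finset

section Orientations

variable {V : Type*} {G : SimpleGraph V} {θ : V → V → Prop}

theorem isOrientation_iff : IsOrientation G θ ↔ ∀ a b, θ a b ↔ G.Adj a b ∧ ¬ θ b a := by
  refine forall₂_congr fun a b => ?_
  by_cases hab : G.Adj a b <;> simp [hab]

theorem relAcyclic_of_map_lt {β : Type*} [Preorder β] (f : V → β)
    (hf : ∀ a b, θ a b → f a < f b) : RelAcyclic θ := by
  have key : ∀ a b, Relation.TransGen θ a b → f a < f b := by
    intro a b h
    induction h with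
    | single h => exact hf _ _ h
    | tail _ h ih => exact ih.trans (hf _ _ h)
  exact fun v hv => lt_irrefl _ (key v v hv)

theorem RelAcyclic.not_rel_of_rel_of_rel (hθ : RelAcyclic θ) {a b c : V} (hab : θ a b)
    (hbc : θ b c) : ¬ θ c a := fun hca =>
  hθ a (.tail (.tail (.single hab) hbc) hca)

theorem RelAcyclic.asymm (hθ : RelAcyclic θ) {a b : V} (hab : θ a b) : ¬ θ b a := fun hba =>
  hθ a (.tail (.single hab) hba)

theorem IsOrientation.isStrictTotalOrder_comap {C : Type*} (ho : IsOrientation G θ)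
    (hθ : RelAcyclic θ) (ι : C → V) (hι : ∀ u v, u ≠ v → G.Adj (ι u) (ι v)) :
    IsStrictTotalOrder C (fun u v => θ (ι u) (ι v)) := by
  rw [isOrientation_iff] at ho
  have total : ∀ u v, u ≠ v → ¬ θ (ι v) (ι u) → θ (ι u) (ι v) := fun u v huv h =>
    (ho _ _).2 ⟨hι u v huv, h⟩
  refine { trichotomous := ?_, irrefl := ?_, trans := ?_ }
  · intro u v hvu huv
    by_contra hne
    exact hvu (total u v hne huv)
  · exact fun u h => hθ _ (.single h)
  · intro u v w huv hvw
    obtain rfl | huw := eq_or_ne u w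
    · exact absurd hvw (hθ.asymm huv)
    · exact total u w huw (hθ.not_rel_of_rel_of_rel huv hvw)

end Orientations

theorem exists_equiv_fin_lt_iff_of_isStrictTotalOrder {α : Type*} [Fintype α]
    (r : α → α → Prop) [IsStrictTotalOrder α r] :
    ∃ σ : α ≃ Fin (Fintype.card α), ∀ a b, r a b ↔ σ a < σ b := by
  classical
  let := linearOrderOfSTO r
  exact ⟨(Fintype.orderIsoFinOfCardEq α rfl).symm.toEquiv, fun a b =>
    (OrderIso.lt_iff_lt (Fintype.orderIsoFinOfCardEq α rfl).symm).symm⟩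

theorem Equiv.eq_of_lt_iff_lt {α : Type*} {m : ℕ} {σ τ : α ≃ Fin m}
    (h : ∀ a b, σ a < σ b ↔ τ a < τ b) : σ = τ := by
  have hmono : StrictMono (τ ∘ σ.symm) := fun x y hxy => by
    simpa only [Function.comp_apply, ← h, Equiv.apply_symm_apply] using hxy
  ext a
  simpa using congrArg Fin.val (hmono.apply_eq (x := σ a)).symm

section InitialSegments

variable {α β : Type*} [DecidableEq α] [LinearOrder β]

def initialSegments (f : α → β) (s : Finset α) : Finset (Finset α) :=
  s.powerset.filter fun t => ∀ u ∈ t, ∀ w ∈ s, f w < f u → w ∈ t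

variable {f : α → β} {s t : Finset α}

theorem mem_initialSegments :
    t ∈ initialSegments f s ↔ t ⊆ s ∧ ∀ u ∈ t, ∀ w ∈ s, f w < f u → w ∈ t := by
  rw [initialSegments, mem_filter, mem_powerset]

theorem self_mem_initialSegments : s ∈ initialSegments f s :=
  mem_initialSegments.2 ⟨subset_rfl, fun _ _ _ hw _ => hw⟩

theorem filter_lt_mem_initialSegments (x : α) :
    s.filter (fun w => f w < f x) ∈ initialSegments f s := by
  refine mem_initialSegments.2 ⟨filter_subset _ _, fun u hu w hw hwu => ?_⟩
  rw [mem_filter] at hu ⊢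
  exact ⟨hw, hwu.trans hu.2⟩

/-- A proper initial segment is cut off by the least element it misses. -/
theorem eq_filter_lt_of_mem_initialSegments (hf : Function.Injective f)
    (ht : t ∈ initialSegments f s) (hts : t ≠ s) :
    ∃ x ∈ s, s.filter (fun w => f w < f x) = t := by
  rw [mem_initialSegments] at ht
  have hmissing : (s \ t).Nonempty := sdiff_nonempty.2 fun h => hts (ht.1.antisymm h)
  obtain ⟨x, hx, hxmin⟩ := (s \ t).exists_min_image f hmissing
  rw [mem_sdiff] at hx
  refine ⟨x, hx.1, ext fun w => ⟨fun hw => ?_, fun hw => ?_⟩⟩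
  · rw [mem_filter] at hw
    by_contra hwt
    exact not_lt.2 (hxmin w (mem_sdiff.2 ⟨hw.1, hwt⟩)) hw.2
  · refine mem_filter.2 ⟨ht.1 hw, lt_of_not_ge fun hxw => hx.2 ?_⟩
    obtain hxw | hxw := hxw.lt_or_eq
    · exact ht.2 w hw x hx.1 hxw
    · exact hf hxw ▸ hw

theorem card_initialSegments (hf : Function.Injective f) :
    #(initialSegments f s) = #s + 1 := by
  have hsegs :
      initialSegments f s = insert s (s.image fun x => s.filter (fun w => f w < f x)) := by
    ext t
    rw [mem_insert, mem_image]
    refine ⟨fun ht => ?_, ?_⟩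
    · by_cases hts : t = s
      · exact .inl hts
      · exact .inr (eq_filter_lt_of_mem_initialSegments hf ht hts)
    · rintro (rfl | ⟨x, -, rfl⟩)
      exacts [self_mem_initialSegments, filter_lt_mem_initialSegments x]
  have not_lt_of_eq : ∀ x y, y ∈ s →
      s.filter (fun w => f w < f x) = s.filter (fun w => f w < f y) → ¬ f y < f x :=
    fun x y hy hxy hyx =>
      lt_irrefl (f y) (mem_filter.1 (hxy ▸ mem_filter.2 ⟨hy, hyx⟩ : y ∈ s.filter _)).2
  have hinj : Set.InjOn (fun x => s.filter (fun w => f w < f x)) s := fun x hx y hy hxy =>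
    hf (le_antisymm (not_lt.1 (not_lt_of_eq x y hy hxy)) (not_lt.1 (not_lt_of_eq y x hx hxy.symm)))
  have hs : s ∉ s.image fun x => s.filter (fun w => f w < f x) := by
    rw [mem_image]
    rintro ⟨x, hx, hxs⟩
    have : x ∈ s.filter (fun w => f w < f x) := by rw [hxs]; exact hx
    exact lt_irrefl _ (mem_filter.1 this).2
  rw [hsegs, card_insert_of_notMem hs, card_image_of_injOn hinj]

end InitialSegments

section SplitGraph

variable {C P : Type*}

def splitGraph (N : P → Finset C) : SimpleGraph (C ⊕ P) where
  Adj a b :=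
    match a, b with
    | .inl u, .inl v => u ≠ v
    | .inl u, .inr p => u ∈ N p
    | .inr p, .inl u => u ∈ N p
    | .inr _, .inr _ => False
  symm := by
    constructor
    rintro (u | p) (v | q) h
    exacts [Ne.symm h, h, h, h]
  loopless := by
    constructor
    rintro (u | p) h
    exacts [h rfl, h]

variable {n : ℕ} (N : P → Finset C)

def splitOrientation (σ : C → Fin n) (S : P → Finset C) : C ⊕ P → C ⊕ P → Prop
  | .inl u, .inl v => σ u < σ v
  | .inl u, .inr p => u ∈ S p
  | .inr p, .inl u => u ∈ N p ∧ u ∉ S p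
  | .inr _, .inr _ => False

variable {N} {σ : C → Fin n} {S : P → Finset C}

theorem isOrientation_splitOrientation (hσ : Function.Injective σ) (hS : ∀ p, S p ⊆ N p) :
    IsOrientation (splitGraph N) (splitOrientation N σ S) := by
  rw [isOrientation_iff]
  rintro (u | p) (v | q)
  · show σ u < σ v ↔ u ≠ v ∧ ¬ σ v < σ u
    rw [← hσ.ne_iff, not_lt, lt_iff_le_and_ne, and_comm]
  · show u ∈ S q ↔ u ∈ N q ∧ ¬ (u ∈ N q ∧ u ∉ S q)
    have := @hS q u
    tauto
  · exact and_congr_right' (not_congr Iff.rfl)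
  · exact (and_iff_left_of_imp False.elim).symm

theorem relAcyclic_splitOrientation [DecidableEq C] (hσ : Function.Injective σ)
    (hS : ∀ p, S p ∈ initialSegments σ (N p)) :
    RelAcyclic (splitOrientation N σ S) := by
  let top (p : P) : ℕ := (S p).sup fun u => (σ u : ℕ) + 1
  let height : C ⊕ P → ℕ
    | .inl u => 2 * (σ u : ℕ) + 1
    | .inr p => 2 * top p
  refine relAcyclic_of_map_lt height ?_
  rintro (u | p) (v | q) h
  · exact Nat.add_lt_add_right (Nat.mul_lt_mul_of_pos_left (Fin.lt_def.1 h) two_pos) 1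
  · have : (σ u : ℕ) + 1 ≤ top q := le_sup (f := fun u => (σ u : ℕ) + 1) h
    show 2 * (σ u : ℕ) + 1 < 2 * top q
    omega
  · obtain ⟨hvN, hvS⟩ := h
    have : top p ≤ σ v := by
      refine Finset.sup_le fun w hw => Nat.succ_le_of_lt (Fin.lt_def.1 ?_)
      refine lt_of_le_of_ne (not_lt.1 fun hvw => hvS ?_) (hσ.ne fun hwv => hvS (hwv ▸ hw))
      exact (mem_initialSegments.1 (hS p)).2 w hw v hvN hvw
    show 2 * top p < 2 * (σ v : ℕ) + 1
    omega
  · exact h.elim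

theorem splitOrientation_injective {m : ℕ} {σ τ : C ≃ Fin m} {S T : P → Finset C}
    (h : splitOrientation N σ S = splitOrientation N τ T) : σ = τ ∧ S = T := by
  have hrel := fun a b => iff_of_eq (congrFun (congrFun h a) b)
  exact ⟨Equiv.eq_of_lt_iff_lt fun u v => hrel (.inl u) (.inl v),
    funext fun p => ext fun u => hrel (.inl u) (.inr p)⟩

theorem exists_eq_splitOrientation [Fintype C] [DecidableEq C] {θ : C ⊕ P → C ⊕ P → Prop}
    (ho : IsOrientation (splitGraph N) θ) (hθ : RelAcyclic θ) :
    ∃ σ : C ≃ Fin (Fintype.card C), ∃ S : P → Finset C,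
      (∀ p, S p ∈ initialSegments σ (N p)) ∧ splitOrientation N σ S = θ := by
  have := ho.isStrictTotalOrder_comap hθ Sum.inl fun _ _ huv => huv
  obtain ⟨σ, hσ⟩ :=
    exists_equiv_fin_lt_iff_of_isStrictTotalOrder fun u v => θ (.inl u) (.inl v)
  rw [isOrientation_iff] at ho
  classical
  refine ⟨σ, fun p => (N p).filter fun u => θ (.inl u) (.inr p), fun p => ?_, ?_⟩
  · refine mem_initialSegments.2 ⟨filter_subset _ _, fun u hu w hw hwu => ?_⟩
    rw [mem_filter] at hu ⊢
    refine ⟨hw, by_contra fun hwp => hθ.not_rel_of_rel_of_rel ((hσ w u).2 hwu) hu.2 ?_⟩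
    exact (ho (.inr p) (.inl w)).2 ⟨hw, hwp⟩
  · funext a b
    apply propext
    rcases a with u | p <;> rcases b with v | q
    · exact (hσ u v).symm
    · exact mem_filter.trans ⟨fun h => h.2, fun h => ⟨((ho _ _).1 h).1, h⟩⟩
    · show v ∈ N p ∧ v ∉ (N p).filter _ ↔ _
      rw [mem_filter, ho (.inr p) (.inl v)]
      exact and_congr_right fun hv => not_congr (and_iff_right hv)
    · exact ⟨False.elim, fun h => ((ho _ _).1 h).1⟩

end SplitGraph

theorem numAcyclicOrientations_splitGraph {C P : Type*} [Fintype C] [Fintype P]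
    (N : P → Finset C) :
    numAcyclicOrientations (splitGraph N) = (Fintype.card C).factorial * ∏ p, (#(N p) + 1) := by
  classical
  let toOrientation (x : Σ σ : C ≃ Fin (Fintype.card C), ∀ p, initialSegments σ (N p)) :
      {θ // IsOrientation (splitGraph N) θ ∧ RelAcyclic θ} :=
    ⟨splitOrientation N x.1 fun p => x.2 p,
      isOrientation_splitOrientation x.1.injective fun p => (mem_initialSegments.1 (x.2 p).2).1,
      relAcyclic_splitOrientation x.1.injective fun p => (x.2 p).2⟩
  have hbij : Function.Bijective toOrientation := by
    refine ⟨fun ⟨σ, S⟩ ⟨τ, T⟩ h => ?_, fun ⟨θ, ho, hθ⟩ => ?_⟩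
    · obtain ⟨rfl, hST⟩ := splitOrientation_injective (congrArg Subtype.val h)
      exact Sigma.ext rfl (heq_of_eq (funext fun p => Subtype.ext (congrFun hST p)))
    · obtain ⟨σ, S, hS, rfl⟩ := exists_eq_splitOrientation ho hθ
      exact ⟨⟨σ, fun p => ⟨S p, hS p⟩⟩, rfl⟩
  rw [numAcyclicOrientations, ← Nat.card_congr (Equiv.ofBijective _ hbij),
    Nat.card_eq_fintype_card, Fintype.card_sigma]
  simp only [Fintype.card_pi, Fintype.card_coe, card_initialSegments (Equiv.injective _), sum_const,
    card_univ, Fintype.card_equiv (Fintype.equivFin C), smul_eq_mul]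

theorem graphH_eq_splitGraph (k : ℕ) (ns : ℕ → ℕ) :
    graphH k ns = splitGraph fun p : Σ i : Fin k, Fin (ns i) => Iio p.1 := by
  ext a b
  rcases a with u | p <;> rcases b with v | q <;> simp [graphH, splitGraph]

theorem numAcyclicOrientations_graphH_general (k : ℕ) (ns : ℕ → ℕ) :
    numAcyclicOrientations (graphH k ns)
      = k.factorial * ∏ i ∈ Finset.range k, (i + 1) ^ ns i := by
  rw [graphH_eq_splitGraph, numAcyclicOrientations_splitGraph, Fintype.card_fin,
    Fintype.prod_sigma, ← Fin.prod_univ_eq_prod_range (fun i => (i + 1) ^ ns i)]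
  simp [Fin.card_Iio]

/-- The number of acyclic orientations of `G = H(k, n_0, …, n_{k-1})` is
`a(G) = k! · Π_{i=0}^{k-1} (i+1)^{n_i}`. -/
theorem numAcyclicOrientations_graphH (k : ℕ) (hk : 1 ≤ k) (ns : ℕ → ℕ) :
    numAcyclicOrientations (graphH k ns)
      = k.factorial * ∏ i ∈ Finset.range k, (i + 1) ^ ns i :=
  numAcyclicOrientations_graphH_general k ns
end

section
/- Let n, m be natural numbers with m ≤ C(n,2). For every finite simple graph G with n vertices and m edges, the total number of cliques of G is at most the total number of cliques of H_{n,m}. -/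
open SimpleGraph

/-- The graph `H_{n,m}` on `n` vertices, where `k` is the unique integer with
`C(k,2) ≤ m < C(k+1,2)` and `r = m - C(k,2)`: a clique on the `k` vertices `0, …, k-1`, one
additional vertex `k` adjacent to exactly `r` of the clique vertices (when `r > 0`), and all
remaining vertices isolated. -/
def graphHnm (n k r : ℕ) : SimpleGraph (Fin n) where
  Adj a b := a ≠ b ∧
    ((a.val < k ∧ b.val < k) ∨ (a.val = k ∧ b.val < r) ∨ (b.val = k ∧ a.val < r))
  symm := ⟨by
    rintro a b ⟨hab, h⟩
    exact ⟨hab.symm, by tauto⟩⟩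
  loopless := ⟨fun a h => h.1 rfl⟩

/-!
Count cliques size by size; the singletons agree. For `s ≥ 2` the `(s - 2)`-fold shadow of the
`s`-cliques of `G` consists of edges, of which there are `C(k,2) + r`. If there were more than
`C(k,s) + C(r,s-1)` cliques of size `s`, Kruskal–Katona would compare them with the initial colex
segment ending at `{0, …, s-3, max r (s-2), k}`: it has `C(k,s) + C(r,s-1) + 1` members, and its
`(s - 2)`-fold shadow is an initial segment containing `{r, k}`, hence at least `C(k,2) + r + 1`
pairs. Both counts follow from `#(initSeg (insert a s)) = C(#(Iio a), #s + 1) + #(initSeg s)` for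
`s < a`. So `G` has at most `C(k,s) + C(r,s-1)` cliques of size `s`, as many as `H_{n,m}` has.
-/

open Finset Finset.Colex
open scoped FinsetFamily

lemma Nat.succ_choose_two (k : ℕ) : (k + 1).choose 2 = k.choose 2 + k := by
  rw [Nat.choose_succ_succ', Nat.choose_one_right, add_comm]

namespace Finset.Colex

variable {α : Type*} [LinearOrder α] {𝒜 : Finset (Finset α)} {r : ℕ}

lemma IsInitSeg.shadow_iterate [Finite α] (h𝒜 : IsInitSeg 𝒜 r) (i : ℕ) :
    IsInitSeg (∂^[i] 𝒜) (r - i) := by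
  induction i with
  | zero => simpa
  | succ i ih =>
    rw [Function.iterate_succ_apply', Nat.sub_succ]
    exact ih.shadow

lemma IsInitSeg.initSeg_subset [Fintype α] {s : Finset α} (h𝒜 : IsInitSeg 𝒜 r) (hs : s ∈ 𝒜) :
    initSeg s ⊆ 𝒜 := by
  intro t ht
  obtain ⟨hst, hts⟩ := mem_initSeg.1 ht
  obtain rfl | hlt := hts.eq_or_lt
  · exact hs
  · exact h𝒜.2 hs ⟨hlt, hst ▸ h𝒜.1 hs⟩

variable [Fintype α]

lemma initSeg_eq_singleton_of_isLowerSet {s : Finset α} (hs : IsLowerSet (s : Set α)) :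
    initSeg s = {s} := by
  ext t
  rw [mem_initSeg, mem_singleton]
  refine ⟨fun ⟨hst, hts⟩ => eq_of_subset_of_card_le (fun a hat => ?_) hst.le,
    fun h => h ▸ ⟨rfl, le_rfl⟩⟩
  by_contra has
  obtain ⟨b, hbs, -, hab⟩ := toColex_le_toColex.1 hts hat has
  exact has (hs hab hbs)

variable [LocallyFiniteOrderBot α]

lemma initSeg_insert {a : α} {s : Finset α} (hs : ∀ b ∈ s, b < a) :
    initSeg (insert a s) = powersetCard (#s + 1) (Iio a) ∪ (initSeg s).image (insert a) := by
  have has : a ∉ s := fun h => lt_irrefl a (hs a h)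
  ext t
  simp only [mem_union, mem_powersetCard, mem_image, mem_initSeg, card_insert_of_notMem has]
  constructor
  · rintro ⟨hcard, hle⟩
    by_cases hat : a ∈ t
    · refine Or.inr ⟨t.erase a, ⟨?_, ?_⟩, insert_erase hat⟩
      · rw [card_erase_of_mem hat]; omega
      · have hsub : ({a} : Finset α) ⊆ insert a s := singleton_subset_iff.2 (mem_insert_self a s)
        rw [← toColex_sdiff_le_toColex_sdiff (singleton_subset_iff.2 hat) hsub,
          sdiff_singleton_eq_erase, sdiff_singleton_eq_erase, erase_insert has] at hle
        exact hle
    · refine Or.inl ⟨fun b hbt => mem_Iio.2 (lt_of_le_of_ne ?_ ?_), hcard.symm⟩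
      · exact forall_le_mono hle (by simpa using fun b hb => (hs b hb).le) b hbt
      · rintro rfl; exact hat hbt
  · rintro (⟨hta, hcard⟩ | ⟨u, ⟨hcard, hle⟩, rfl⟩)
    · refine ⟨hcard.symm, (toColex_lt_singleton.2 fun b hb => mem_Iio.1 (hta hb)).le.trans ?_⟩
      exact toColex_le_toColex_of_subset (singleton_subset_iff.2 (mem_insert_self a s))
    · have hau : a ∉ u := fun h => lt_irrefl a (forall_lt_mono hle hs a h)
      refine ⟨by rw [card_insert_of_notMem hau, hcard], ?_⟩
      rwa [← toColex_sdiff_le_toColex_sdiff (singleton_subset_iff.2 (mem_insert_self a u))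
        (singleton_subset_iff.2 (mem_insert_self a s)), sdiff_singleton_eq_erase,
        sdiff_singleton_eq_erase, erase_insert hau, erase_insert has]

lemma card_initSeg_insert {a : α} {s : Finset α} (hs : ∀ b ∈ s, b < a) :
    #(initSeg (insert a s)) = (#(Iio a)).choose (#s + 1) + #(initSeg s) := by
  have hnot : ∀ u ∈ initSeg s, a ∉ u := fun u hu h =>
    lt_irrefl a (forall_lt_mono (mem_initSeg.1 hu).2 hs a h)
  rw [initSeg_insert hs, card_union_of_disjoint, card_powersetCard, card_image_of_injOn]
  · intro u hu v hv huv
    simpa [erase_insert (hnot u hu), erase_insert (hnot v hv)] using congrArg (erase · a) huv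
  · refine disjoint_left.2 fun t ht ht' => ?_
    obtain ⟨u, -, rfl⟩ := mem_image.1 ht'
    exact lt_irrefl a (mem_Iio.1 ((mem_powersetCard.1 ht).1 (mem_insert_self a u)))

lemma card_initSeg_singleton (a : α) : #(initSeg {a}) = #(Iio a) + 1 := by
  rw [← insert_empty, card_initSeg_insert (by simp),
    initSeg_eq_singleton_of_isLowerSet (by rw [coe_empty]; exact isLowerSet_empty)]
  simp

lemma card_initSeg_insert_Iio {a c : α} (hca : c ≤ a) :
    #(initSeg (insert a (Iio c))) = (#(Iio a)).choose (#(Iio c) + 1) + 1 := by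
  rw [card_initSeg_insert fun b hb => (mem_Iio.1 hb).trans_le hca,
    initSeg_eq_singleton_of_isLowerSet (by rw [coe_Iio]; exact isLowerSet_Iio c), card_singleton]

end Finset.Colex

namespace Finset

lemma powersetCard_subset_shadow_iterate {α : Type*} [DecidableEq α] {𝒜 : Finset (Finset α)}
    {s : Finset α} (hs : s ∈ 𝒜) (t : ℕ) : powersetCard t s ⊆ ∂^[#s - t] 𝒜 := by
  intro u hu
  obtain ⟨hus, hucard⟩ := mem_powersetCard.1 hu
  exact mem_shadow_iterate_iff_exists_sdiff.2 ⟨s, hs, hus, by rw [card_sdiff_of_subset hus, hucard]⟩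

variable {n s k r : ℕ} {𝒜 : Finset (Finset (Fin n))}

theorem choose_two_add_lt_card_shadow_iterate_of_le_succ (h𝒜 : (𝒜 : Set (Finset (Fin n))).Sized s)
    (hs : 2 ≤ s) (hsk : s ≤ k + 1) (hrk : r < k) (hkn : k < n)
    (h𝒜card : k.choose s + r.choose (s - 1) < #𝒜) : k.choose 2 + r < #(∂^[s - 2] 𝒜) := by
  let κ : Fin n := ⟨k, hkn⟩
  let ρ : Fin n := ⟨max r (s - 2), by omega⟩
  let ι : Fin n := ⟨r, by omega⟩
  let c : Fin n := ⟨s - 2, by omega⟩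
  let top := insert κ (insert ρ (Iio c))
  have hcρ : c ≤ ρ := by simp [Fin.le_def, c, ρ]
  have hρκ : ∀ b ∈ insert ρ (Iio c), b < κ := fun b hb => by
    simp only [mem_insert, mem_Iio, Fin.lt_def, Fin.ext_iff, κ, ρ, c] at hb ⊢; omega
  have hρ : ρ ∉ Iio c := by simp [hcρ]
  have htop_card : #top = s := by
    rw [card_insert_of_notMem fun h => lt_irrefl _ (hρκ κ h), card_insert_of_notMem hρ,
      Fin.card_Iio]
    simp only [c]
    omega
  have hinit_top : #(initSeg top) ≤ #𝒜 := by
    have hchoose : (max r (s - 2)).choose (s - 1) = r.choose (s - 1) := by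
      rcases le_total (s - 2) r with h | h
      · rw [max_eq_left h]
      · rw [max_eq_right h, Nat.choose_eq_zero_of_lt (by omega),
          Nat.choose_eq_zero_of_lt (by omega)]
    rw [card_initSeg_insert hρκ, card_initSeg_insert_Iio hcρ, card_insert_of_notMem hρ]
    simp only [Fin.card_Iio, κ, ρ, c]
    rw [show s - 2 + 1 + 1 = s by omega, show s - 2 + 1 = s - 1 by omega, hchoose]
    omega
  have hpair_card : #(initSeg {κ, ι}) = k.choose 2 + r + 1 := by
    rw [card_initSeg_insert (by simpa [κ, ι, Fin.lt_def] using hrk), card_initSeg_singleton]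
    simp [κ, ι, add_assoc]
  have hpair : {κ, ι} ∈ ∂^[s - 2] (initSeg top) := by
    have hιtop : ι ∈ insert ρ (Iio c) := by
      rcases lt_or_ge r (s - 2) with h | h
      · exact mem_insert_of_mem (by simpa [ι, c, Fin.lt_def] using h)
      · exact mem_insert.2 (Or.inl (Fin.ext (max_eq_left h).symm))
    have := powersetCard_subset_shadow_iterate (mem_initSeg_self (s := top)) 2
    rw [htop_card] at this
    refine this (mem_powersetCard.2 ⟨insert_subset_insert κ (by simpa using hιtop), ?_⟩)
    exact card_pair (by simp [κ, ι, Fin.ext_iff]; omega)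
  calc k.choose 2 + r < #(initSeg {κ, ι}) := by omega
    _ ≤ #(∂^[s - 2] (initSeg top)) :=
      card_le_card ((isInitSeg_initSeg.shadow_iterate _).initSeg_subset hpair)
    _ ≤ #(∂^[s - 2] 𝒜) := iterated_kk h𝒜 hinit_top (htop_card ▸ isInitSeg_initSeg)

theorem choose_two_add_lt_card_shadow_iterate (h𝒜 : (𝒜 : Set (Finset (Fin n))).Sized s)
    (hs : 2 ≤ s) (hrk : r < k) (h𝒜card : k.choose s + r.choose (s - 1) < #𝒜) :
    k.choose 2 + r < #(∂^[s - 2] 𝒜) := by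
  obtain hnk | hkn := le_or_gt n k
  · have := h𝒜.card_le.trans (Nat.choose_le_choose s ((Fintype.card_fin n).trans_le hnk))
    omega
  obtain hsk | hks := le_or_gt s (k + 1)
  · exact choose_two_add_lt_card_shadow_iterate_of_le_succ h𝒜 hs hsk hrk hkn h𝒜card
  obtain ⟨A, hA⟩ := card_pos.1 (by omega : 0 < #𝒜)
  calc k.choose 2 + r < (k + 1).choose 2 := by rw [Nat.succ_choose_two]; omega
    _ ≤ #(powersetCard 2 A) := by rw [card_powersetCard, h𝒜 hA]; exact Nat.choose_le_choose 2 hks.le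
    _ ≤ #(∂^[s - 2] 𝒜) := h𝒜 hA ▸ card_le_card (powersetCard_subset_shadow_iterate hA 2)

end Finset

namespace SimpleGraph

variable {V : Type*} [Fintype V] [DecidableEq V] (G : SimpleGraph V) [DecidableRel G.Adj]

lemma shadow_iterate_cliqueFinset_subset (t i : ℕ) :
    ∂^[i] (G.cliqueFinset t) ⊆ G.cliqueFinset (t - i) := by
  intro u hu
  obtain ⟨A, hA, huA, hcard⟩ := mem_shadow_iterate_iff_exists_sdiff.1 hu
  obtain ⟨hAclique, rfl⟩ := mem_cliqueFinset_iff.1 hA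
  rw [card_sdiff_of_subset huA] at hcard
  exact mem_cliqueFinset_iff.2 ⟨hAclique.subset (by simpa using huA), by
    have := card_le_card huA; omega⟩

lemma card_cliqueFinset_two : #(G.cliqueFinset 2) = #G.edgeFinset := by
  have hinj : Set.InjOn Sym2.toFinset (G.edgeFinset : Set (Sym2 V)) := fun z _ w _ h =>
    Sym2.ext fun x => by rw [← Sym2.mem_toFinset, h, Sym2.mem_toFinset]
  rw [← card_image_of_injOn hinj]
  congr 1
  ext t
  simp only [mem_cliqueFinset_iff, isNClique_iff, mem_image, mem_edgeFinset]
  constructor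
  · rintro ⟨ht, htcard⟩
    obtain ⟨a, b, hab, rfl⟩ := card_eq_two.1 htcard
    exact ⟨s(a, b), ht (by simp) (by simp) hab, Sym2.toFinset_mk_eq⟩
  · rintro ⟨z, hz, rfl⟩
    induction z with
    | _ a b =>
      rw [Sym2.toFinset_mk_eq]
      exact ⟨by simpa [isClique_pair] using fun _ => hz, card_pair (G.ne_of_adj hz)⟩

lemma cliqueFinset_one : G.cliqueFinset 1 = univ.map ⟨singleton, singleton_injective⟩ := by
  ext t
  simp [isNClique_one, eq_comm]

end SimpleGraph

theorem SimpleGraph.card_cliqueFinset_le_of_card_edgeFinset_eq {n k r s : ℕ}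
    (G : SimpleGraph (Fin n)) [DecidableRel G.Adj] (hrk : r < k)
    (hG : #G.edgeFinset = k.choose 2 + r) (hs : 2 ≤ s) :
    #(G.cliqueFinset s) ≤ k.choose s + r.choose (s - 1) := by
  by_contra! h
  have hshadow := card_le_card (G.shadow_iterate_cliqueFinset_subset s (s - 2))
  rw [show s - (s - 2) = 2 by omega, card_cliqueFinset_two, hG] at hshadow
  have := choose_two_add_lt_card_shadow_iterate
    (fun t ht => (mem_cliqueFinset_iff.1 ht).card_eq) hs hrk h
  omega

theorem numCliques_eq_sum_card_cliqueFinset {V : Type*} [Fintype V] [DecidableEq V]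
    (G : SimpleGraph V) [DecidableRel G.Adj] :
    numCliques G = ∑ s ∈ Icc 1 (Fintype.card V), #(G.cliqueFinset s) := by
  classical
  rw [numCliques, Nat.card_eq_fintype_card, Fintype.card_subtype,
    card_eq_sum_card_fiberwise (f := card) (t := Icc 1 (Fintype.card V))]
  · refine sum_congr rfl fun s hs => congrArg card ?_
    ext t
    simp only [mem_filter, mem_univ, true_and, mem_cliqueFinset_iff, isNClique_iff]
    rw [mem_Icc] at hs
    constructor
    · rintro ⟨⟨-, ht⟩, rfl⟩
      exact ⟨ht, rfl⟩
    · rintro ⟨ht, rfl⟩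
      exact ⟨⟨card_pos.1 (by omega), ht⟩, rfl⟩
  · intro t ht
    exact mem_Icc.2 ⟨card_pos.2 (mem_filter.1 ht).2.1, card_le_univ t⟩

theorem numCliques_le_numCliques_of_card_cliqueFinset_le {V : Type*} [Fintype V] [DecidableEq V]
    {G H : SimpleGraph V} [DecidableRel G.Adj] [DecidableRel H.Adj]
    (h : ∀ s, 2 ≤ s → #(G.cliqueFinset s) ≤ #(H.cliqueFinset s)) :
    numCliques G ≤ numCliques H := by
  rw [numCliques_eq_sum_card_cliqueFinset, numCliques_eq_sum_card_cliqueFinset]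
  refine sum_le_sum fun s hs => ?_
  obtain rfl | hs2 : s = 1 ∨ 2 ≤ s := by rw [mem_Icc] at hs; omega
  · rw [G.cliqueFinset_one, H.cliqueFinset_one]
  · exact h s hs2

lemma Fin.val_lt_of_mem_map_castLEEmb {j n : ℕ} (h : j ≤ n) {a : Fin n}
    (ha : a ∈ univ.map (Fin.castLEEmb h)) : (a : ℕ) < j := by
  obtain ⟨i, -, rfl⟩ := mem_map.1 ha
  exact i.isLt

theorem choose_add_choose_le_card_cliqueFinset_graphHnm {n k r s : ℕ}
    [DecidableRel (graphHnm n k r).Adj] (hrk : r ≤ k) (hkn : k ≤ n) (hr : 0 < r → k < n)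
    (hs : 2 ≤ s) : k.choose s + r.choose (s - 1) ≤ #((graphHnm n k r).cliqueFinset s) := by
  let K := univ.map (Fin.castLEEmb hkn)
  have hK {a : Fin n} (ha : a ∈ K) : (a : ℕ) < k := Fin.val_lt_of_mem_map_castLEEmb _ ha
  have hKcliques : powersetCard s K ⊆ (graphHnm n k r).cliqueFinset s := fun t ht => by
    obtain ⟨htK, htcard⟩ := mem_powersetCard.1 ht
    exact mem_cliqueFinset_iff.2
      ⟨fun a ha b hb hab => ⟨hab, Or.inl ⟨hK (htK ha), hK (htK hb)⟩⟩, htcard⟩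
  have hKcard : #(powersetCard s K) = k.choose s := by simp [K]
  obtain rfl | hr0 := r.eq_zero_or_pos
  · simpa [Nat.choose_eq_zero_of_lt (by omega : 0 < s - 1), ← hKcard] using card_le_card hKcliques
  let κ : Fin n := ⟨k, hr hr0⟩
  let R := univ.map (Fin.castLEEmb (hrk.trans hkn))
  have hR {a : Fin n} (ha : a ∈ R) : (a : ℕ) < r := Fin.val_lt_of_mem_map_castLEEmb _ ha
  let 𝒦 := (powersetCard (s - 1) R).image (insert κ)
  have hκR : ∀ S ∈ powersetCard (s - 1) R, κ ∉ S := fun S hS hκ =>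
    absurd (hR ((mem_powersetCard.1 hS).1 hκ)) (by simp [κ]; omega)
  have h𝒦cliques : 𝒦 ⊆ (graphHnm n k r).cliqueFinset s := by
    intro t ht
    obtain ⟨S, hS, rfl⟩ := mem_image.1 ht
    obtain ⟨hSR, hScard⟩ := mem_powersetCard.1 hS
    refine mem_cliqueFinset_iff.2 ⟨?_, by rw [card_insert_of_notMem (hκR S hS)]; omega⟩
    rw [coe_insert, isClique_insert]
    refine ⟨fun a ha b hb hab => ⟨hab, Or.inl ?_⟩, fun b hb hκb => ⟨hκb, Or.inr (Or.inl ?_)⟩⟩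
    · have := hR (hSR ha); have := hR (hSR hb); omega
    · exact ⟨rfl, hR (hSR hb)⟩
  have hdisj : Disjoint (powersetCard s K) 𝒦 := by
    refine disjoint_left.2 fun t htK ht𝒦 => ?_
    obtain ⟨S, -, rfl⟩ := mem_image.1 ht𝒦
    exact absurd (hK ((mem_powersetCard.1 htK).1 (mem_insert_self κ S))) (by simp [κ])
  have h𝒦card : #𝒦 = r.choose (s - 1) := by
    rw [card_image_of_injOn, card_powersetCard, card_map, card_univ, Fintype.card_fin]
    intro S hS T hT hST
    simpa [erase_insert (hκR S hS), erase_insert (hκR T hT)] using congrArg (erase · κ) hST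
  rw [← hKcard, ← h𝒦card, ← card_union_of_disjoint hdisj]
  exact card_le_card (union_subset hKcliques h𝒦cliques)

/-- Among all graphs with `n` vertices and `m ≤ C(n,2)` edges, the graph `H_{n,m}` maximises
the total number of cliques. -/
theorem numCliques_le_graphHnm (n m k r : ℕ) (hm : m ≤ n * (n - 1) / 2)
    (hk1 : k * (k - 1) / 2 ≤ m) (hk2 : m < (k + 1) * k / 2) (hr : r = m - k * (k - 1) / 2)
    (G : SimpleGraph (Fin n)) (hG : Nat.card G.edgeSet = m) :
    numCliques G ≤ numCliques (graphHnm n k r) := by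
  classical
  have hk : (k + 1) * k / 2 = k.choose 2 + k := by
    rw [← Nat.succ_choose_two, Nat.choose_two_right, Nat.add_sub_cancel]
  rw [← Nat.choose_two_right] at hm
  rw [← Nat.choose_two_right] at hk1 hr
  rw [hk] at hk2
  have hrk : r < k := by omega
  have hGedges : #G.edgeFinset = k.choose 2 + r := by
    rw [edgeFinset_card, ← Nat.card_eq_fintype_card, hG]; omega
  refine numCliques_le_numCliques_of_card_cliqueFinset_le fun s hs => ?_
  obtain rfl | hn := n.eq_zero_or_pos
  · have := G.card_cliqueFinset_le (n := s)
    rw [Fintype.card_fin, Nat.choose_eq_zero_of_lt (by omega)] at this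
    omega
  have hkn : k ≤ n := by
    by_contra! hnk
    have := Nat.choose_le_choose 2 hnk
    rw [Nat.succ_choose_two] at this
    omega
  have hkn' : 0 < r → k < n := fun hr0 => by
    by_contra! hnk
    have := Nat.choose_le_choose 2 hnk
    omega
  exact (G.card_cliqueFinset_le_of_card_edgeFinset_eq hrk hGedges hs).trans
    (choose_add_choose_le_card_cliqueFinset_graphHnm hrk.le hkn hkn' hs)
end

section
/- Let n, m be natural numbers with 0 < m ≤ C(n,2), and let k be the largest integer with m > C(k,2). Then every finite simple graph G with n vertices and m edges has at most n − k connected components, and this bound is attained by some graph with n vertices and m edges. -/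
/-!
A component with `s` vertices spans at most `C(s, 2)` edges, and since
`C(a + 1, 2) + C(b + 1, 2) ≤ C(a + b + 1, 2)`, a graph on `n` vertices with `c` components has at
most `C(n - c + 1, 2)` edges. More than `n - k` components would therefore leave room for at most
`C(k, 2) < m` edges.

The bound is attained by the graph whose edges are the first `m` pairs in colexicographic order:
since `C(k, 2) < m ≤ C(k + 1, 2)`, it joins vertex `0` to every vertex `≤ k` and leaves the
`n - k - 1` vertices above `k` isolated.
-/

open SimpleGraph Finset

namespace Nat

lemma choose_two_succ (b : ℕ) : (b + 1).choose 2 = b.choose 2 + b := by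
  rw [choose_succ_succ', choose_one_right, add_comm]

lemma choose_two_add_lt_choose_two {a b c : ℕ} (hab : a < b) (hbc : b < c) :
    b.choose 2 + a < c.choose 2 :=
  calc b.choose 2 + a < (b + 1).choose 2 := by rw [choose_two_succ]; omega
    _ ≤ c.choose 2 := choose_le_choose 2 hbc

lemma eq_of_choose_two_add_eq {a b a' b' : ℕ} (ha : a < b) (ha' : a' < b')
    (h : b.choose 2 + a = b'.choose 2 + a') : b = b' ∧ a = a' := by
  obtain hlt | rfl | hgt := lt_trichotomy b b'
  · have := choose_two_add_lt_choose_two ha hlt; omega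
  · omega
  · have := choose_two_add_lt_choose_two ha' hgt; omega

lemma exists_choose_two_add_eq (r : ℕ) : ∃ a b, a < b ∧ b.choose 2 + a = r := by
  induction r with
  | zero => exact ⟨0, 1, one_pos, rfl⟩
  | succ r ih =>
    obtain ⟨a, b, hab, rfl⟩ := ih
    rcases (succ_le_of_lt hab).lt_or_eq with h | rfl
    · exact ⟨a + 1, b, h, rfl⟩
    · exact ⟨0, a + 2, by omega, by rw [choose_two_succ]; ring⟩

lemma succ_choose_two_add_succ_choose_two_le (a b : ℕ) :
    (a + 1).choose 2 + (b + 1).choose 2 ≤ (a + b + 1).choose 2 := by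
  induction b with
  | zero => simp
  | succ b ih =>
    rw [choose_two_succ (b + 1), show a + (b + 1) + 1 = a + b + 1 + 1 by ring,
      choose_two_succ (a + b + 1)]
    omega

lemma sum_succ_choose_two_le {ι : Type*} (s : Finset ι) (g : ι → ℕ) :
    ∑ i ∈ s, (g i + 1).choose 2 ≤ (∑ i ∈ s, g i + 1).choose 2 := by
  induction s using Finset.cons_induction with
  | empty => simp
  | cons i s hi ih =>
    rw [sum_cons, sum_cons, add_assoc]
    exact (Nat.add_le_add_left ih _).trans (succ_choose_two_add_succ_choose_two_le _ _)

end Nat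

namespace SimpleGraph

variable {V : Type*} {G : SimpleGraph V}

lemma IsIsolated.eq_of_reachable {v w : V} (hv : G.IsIsolated v) (h : G.Reachable v w) :
    v = w := by
  obtain ⟨p⟩ := h
  cases p with
  | nil => rfl
  | cons hadj _ => exact absurd hadj (hv _)

lemma card_connectedComponent_eq_of_isIsolated [Finite V] (C : G.ConnectedComponent)
    (h : ∀ v ∉ C.supp, G.IsIsolated v) :
    Nat.card G.ConnectedComponent = Nat.card ↥C.suppᶜ + 1 := by
  let F : Option ↥C.suppᶜ → G.ConnectedComponent :=
    fun o => o.elim C (G.connectedComponentMk ·)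
  have hF : F.Bijective := by
    refine ⟨?_, fun D => ?_⟩
    · rintro (_ | ⟨v, hv⟩) (_ | ⟨w, hw⟩) hvw
      · rfl
      · exact absurd hvw.symm hw
      · exact absurd hvw hv
      · exact congrArg some (Subtype.ext
          ((h v hv).eq_of_reachable (ConnectedComponent.exact hvw)))
    · obtain ⟨v, rfl⟩ := D.exists_rep
      by_cases hv : v ∈ C.supp
      · exact ⟨none, hv.symm⟩
      · exact ⟨some ⟨v, hv⟩, rfl⟩
  rw [← Nat.card_eq_of_bijective F hF, Finite.card_option]

section Fintype

variable [Fintype V] [DecidableRel G.Adj]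

lemma degree_lt_ncard_supp (v : V) : G.degree v < (G.connectedComponentMk v).supp.ncard :=
  calc G.degree v < (insert v (G.neighborSet v)).ncard := by
        rw [Set.ncard_insert_of_notMem G.notMem_neighborSet_self, ← Nat.card_coe_set_eq,
          Nat.card_eq_fintype_card, card_neighborSet_eq_degree]
        exact Nat.lt_succ_self _
    _ ≤ (G.connectedComponentMk v).supp.ncard := by
        refine Set.ncard_le_ncard (Set.insert_subset_iff.2 ⟨rfl, fun w hw => ?_⟩)
        exact ConnectedComponent.sound (G.adj_symm hw).reachable

variable [DecidableEq V]

lemma sum_comp_connectedComponentMk (f : G.ConnectedComponent → ℕ) :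
    ∑ v, f (G.connectedComponentMk v) = ∑ C, C.supp.ncard * f C := by
  classical
  rw [sum_comp, image_univ_of_surjective fun C => C.exists_rep]
  refine sum_congr rfl fun C _ => ?_
  rw [smul_eq_mul, ← Set.ncard_coe_finset, coe_filter_univ]
  rfl

lemma card_edgeFinset_le_sum_choose_two :
    #G.edgeFinset ≤ ∑ C : G.ConnectedComponent, C.supp.ncard.choose 2 := by
  have h := calc 2 * #G.edgeFinset = ∑ v, G.degree v := G.sum_degrees_eq_twice_card_edges.symm
    _ ≤ ∑ v, ((G.connectedComponentMk v).supp.ncard - 1) :=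
        sum_le_sum fun v _ => Nat.le_sub_one_of_lt (degree_lt_ncard_supp v)
    _ = ∑ C : G.ConnectedComponent, 2 * C.supp.ncard.choose 2 := by
        rw [sum_comp_connectedComponentMk fun C => C.supp.ncard - 1]
        refine sum_congr rfl fun C _ => ?_
        rw [Nat.choose_two_right, Nat.mul_div_cancel' (Nat.even_mul_pred_self _).two_dvd]
  rw [← mul_sum] at h
  omega

end Fintype

lemma card_edgeSet_le_choose_two [Finite V] :
    Nat.card G.edgeSet ≤ (Nat.card V - Nat.card G.ConnectedComponent + 1).choose 2 := by
  classical
  cases nonempty_fintype V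
  set g : G.ConnectedComponent → ℕ := fun C => C.supp.ncard - 1
  have hg : ∀ C, C.supp.ncard = g C + 1 := fun C =>
    (Nat.sub_add_cancel ((Set.ncard_pos).2 C.nonempty_supp)).symm
  have hcard : Nat.card V = ∑ C, g C + Nat.card G.ConnectedComponent := by
    have := sum_comp_connectedComponentMk (G := G) fun _ => 1
    simp only [mul_one, sum_const, card_univ, smul_eq_mul, hg, sum_add_distrib] at this
    rw [Nat.card_eq_fintype_card, this, Nat.card_eq_fintype_card]
  calc Nat.card G.edgeSet = #G.edgeFinset := by
        rw [Nat.card_eq_fintype_card, ← Set.toFinset_card]; rfl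
    _ ≤ ∑ C, (g C + 1).choose 2 := by
        simpa only [hg] using card_edgeFinset_le_sum_choose_two (G := G)
    _ ≤ (∑ C, g C + 1).choose 2 := Nat.sum_succ_choose_two_le _ _
    _ = _ := by rw [hcard, Nat.add_sub_cancel]

/-- `s(a, b)` with `a < b` is the `(b.choose 2 + a)`-th two-element set in colexicographic
order. -/
def colexRank {n : ℕ} (z : Sym2 (Fin n)) : ℕ := (z.sup : ℕ).choose 2 + z.inf

def colexGraph (n m : ℕ) : SimpleGraph (Fin n) := fromEdgeSet {z | colexRank z < m}

section colex

variable {n m k : ℕ}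

lemma colexRank_injOn : Set.InjOn (colexRank (n := n)) Sym2.diagSetᶜ := by
  intro z hz z' hz' h
  have hlt : ∀ z : Sym2 (Fin n), z ∉ Sym2.diagSet → (z.inf : ℕ) < z.sup := by
    intro z hz
    induction z using Sym2.ind with
    | _ a b =>
      have hab : a ≠ b := fun h => hz (by simp [h])
      simp only [Sym2.inf_mk, Sym2.sup_mk]
      exact lt_of_le_of_ne inf_le_sup (by simpa [Fin.val_inj] using hab)
  obtain ⟨hsup, hinf⟩ := Nat.eq_of_choose_two_add_eq (hlt z hz) (hlt z' hz') h
  exact Sym2.inf_eq_inf_and_sup_eq_sup.1 ⟨Fin.ext hinf, Fin.ext hsup⟩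

lemma colexRank_mk_of_lt {a b : Fin n} (h : a < b) :
    colexRank s(a, b) = (b : ℕ).choose 2 + a := by
  simp [colexRank, max_eq_right h.le, min_eq_left h.le]

lemma card_edgeSet_colexGraph (hm : m ≤ n.choose 2) : Nat.card (colexGraph n m).edgeSet = m := by
  have hbij : Set.BijOn colexRank (colexGraph n m).edgeSet (Set.Iio m) := by
    rw [colexGraph, edgeSet_fromEdgeSet]
    refine ⟨fun z hz => hz.1, colexRank_injOn.mono fun z hz => hz.2, fun r hr => ?_⟩
    obtain ⟨a, b, hab, rfl⟩ := Nat.exists_choose_two_add_eq r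
    have hbn : b < n := (Nat.choose_mono 2).reflect_lt (by have := Set.mem_Iio.1 hr; omega)
    have hlt : (⟨a, hab.trans hbn⟩ : Fin n) < ⟨b, hbn⟩ := hab
    refine ⟨s(⟨a, hab.trans hbn⟩, ⟨b, hbn⟩), ⟨?_, ?_⟩, colexRank_mk_of_lt hlt⟩
    · simpa [colexRank_mk_of_lt hlt] using hr
    · simpa using hlt.ne
  rw [Nat.card_congr (hbij.equiv _), Nat.card_coe_set_eq, Set.ncard_Iio_nat]

lemma colexGraph_adj {a b : Fin n} :
    (colexGraph n m).Adj a b ↔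
      ((max a b : Fin n) : ℕ).choose 2 + (min a b : Fin n) < m ∧ a ≠ b :=
  fromEdgeSet_adj _

lemma card_connectedComponent_colexGraph (hk1 : k.choose 2 < m) (hk2 : m ≤ (k + 1).choose 2)
    (hkn : k < n) : Nat.card (colexGraph n m).ConnectedComponent = n - k := by
  set G := colexGraph n m
  let K : Fin n := ⟨k, hkn⟩
  let v₀ : Fin n := ⟨0, by omega⟩
  have hiso : ∀ v, K < v → G.IsIsolated v := by
    intro v hv w hvw
    have hmax : (k + 1).choose 2 ≤ ((max v w : Fin n) : ℕ).choose 2 :=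
      Nat.choose_le_choose 2 (hv.trans_le le_sup_left)
    have := (colexGraph_adj.1 hvw).1
    omega
  have hreach : ∀ v ≤ K, G.Reachable v₀ v := by
    intro v hv
    obtain rfl | hv₀ := eq_or_ne v₀ v
    · rfl
    refine (colexGraph_adj.2 ⟨?_, hv₀⟩).reachable
    have hv₀v : v₀ ≤ v := Nat.zero_le _
    have : (v : ℕ).choose 2 ≤ k.choose 2 := Nat.choose_le_choose 2 hv
    rw [max_eq_right hv₀v, min_eq_left hv₀v]
    change (v : ℕ).choose 2 + 0 < m
    omega
  have hsupp : (G.connectedComponentMk v₀).suppᶜ = Set.Ioi K := by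
    ext v
    simp only [Set.mem_compl_iff, ConnectedComponent.mem_supp_iff, Set.mem_Ioi]
    refine ⟨fun hv => lt_of_not_ge fun hvK => hv (ConnectedComponent.sound (hreach v hvK).symm),
      fun hv hv₀ => ?_⟩
    have := (hiso v hv).eq_of_reachable (ConnectedComponent.exact hv₀)
    exact Nat.not_lt_zero k (this ▸ hv : K < v₀)
  rw [card_connectedComponent_eq_of_isIsolated (G.connectedComponentMk v₀)
    (fun v hv => hiso v (by rwa [← Set.mem_compl_iff, hsupp] at hv)), hsupp,
    Nat.card_eq_card_toFinset, Set.toFinset_Ioi, Fin.card_Ioi]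
  change n - 1 - k + 1 = n - k
  omega

end colex

end SimpleGraph

theorem max_connectedComponents_general (n m k : ℕ) (hm : m ≤ n * (n - 1) / 2)
    (hk1 : k * (k - 1) / 2 < m) (hk2 : m ≤ (k + 1) * k / 2) :
    (∀ G : SimpleGraph (Fin n), Nat.card G.edgeSet = m →
      Nat.card G.ConnectedComponent ≤ n - k) ∧
    ∃ G : SimpleGraph (Fin n), Nat.card G.edgeSet = m ∧
      Nat.card G.ConnectedComponent = n - k := by
  rw [← Nat.choose_two_right] at hm hk1
  replace hk2 : m ≤ (k + 1).choose 2 := by rwa [Nat.choose_two_right, Nat.add_sub_cancel]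
  have hkn : k < n := (Nat.choose_mono 2).reflect_lt (hk1.trans_le hm)
  refine ⟨fun G hG => ?_, colexGraph n m, card_edgeSet_colexGraph hm,
    card_connectedComponent_colexGraph hk1 hk2 hkn⟩
  by_contra! hlt
  have hk0 : k ≠ 0 := by rintro rfl; simp at hk2; omega
  have hedges := G.card_edgeSet_le_choose_two
  rw [Nat.card_fin, hG] at hedges
  have := Nat.choose_le_choose 2 (show n - Nat.card G.ConnectedComponent + 1 ≤ k by omega)
  omega

/-- Let `k` be the largest integer with `m > C(k,2)`, where `0 < m ≤ C(n,2)`.  Then every graph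
with `n` vertices and `m` edges has at most `n - k` connected components, and this bound is
attained by some graph with `n` vertices and `m` edges. -/
theorem max_connectedComponents (n m k : ℕ) (hm0 : 0 < m) (hm : m ≤ n * (n - 1) / 2)
    (hk1 : k * (k - 1) / 2 < m) (hk2 : m ≤ (k + 1) * k / 2) :
    (∀ G : SimpleGraph (Fin n), Nat.card G.edgeSet = m →
      Nat.card G.ConnectedComponent ≤ n - k) ∧
    ∃ G : SimpleGraph (Fin n), Nat.card G.edgeSet = m ∧
      Nat.card G.ConnectedComponent = n - k :=
  max_connectedComponents_general n m k hm hk1 hk2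
end
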